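/- arXiv:2203.17107 — 7 statements merged into one kernel-verified Lean document; each statement's English description precedes it below -/
import Mathlib

section
/- Let G ⊆ F be a sub-σ-algebra and let (h^ν)_{ν≥1} be a nondecreasing sequence of L-bounded normal integrands on ℝⁿ, and set h := sup_ν h^ν. If for each ν there exists a G-conditional expectation ĥ^ν of h^ν, then sup_ν ĥ^ν is a G-conditional expectation of h. -/
/-!
For a `G`-measurable `x`, the compositions `h ν (x ·) ·` need not be quasi-integrable, so the
defining property of `hhat ν` cannot be applied to them directly. On the `G`-measurable set
`{‖x‖ ≤ k}` one may replace `x` by its truncation, whose compositions have integrable negative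
parts by L-boundedness. For the truncation, monotonicity of conditional expectations makes the
`hhat ν` a.e. increasing, and monotone convergence (upwards for positive parts, downwards for the
integrable negative parts) carries `E[α hhat ν] = E[α h ν]` over to the suprema. Letting `k → ∞`
glues these identities together; quasi-integrability of `sup_ν h ν (x ·) ·` controls the same part
of `sup_ν hhat ν (x ·) ·`, which rules out `∞ - ∞` in the limit.
-/

open MeasureTheory ENNReal
open scoped RealInnerProductSpace

noncomputable section

namespace PaperDP

variable {Ω : Type*}

/-- The positive part of an extended real number, as an element of `ℝ≥0∞`. -/
def ePos (x : EReal) : ℝ≥0∞ := if x = ⊤ then ⊤ else ENNReal.ofReal x.toReal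

/-- The extended integral of an extended-real-valued function: it is `+∞` unless the
positive part of the integrand is integrable, in which case it is the difference of the
integrals of the positive and negative parts. -/
def EInt {mΩ : MeasurableSpace Ω} (μ : Measure Ω) (ξ : Ω → EReal) : EReal :=
  if (∫⁻ ω, ePos (ξ ω) ∂μ) = ⊤ then ⊤
  else ((∫⁻ ω, ePos (ξ ω) ∂μ : ℝ≥0∞) : EReal) - ((∫⁻ ω, ePos (-(ξ ω)) ∂μ : ℝ≥0∞) : EReal)

/-- An extended-real-valued random variable is quasi-integrable if its positive part or
its negative part is integrable. -/
def QuasiIntegrable {mΩ : MeasurableSpace Ω} (μ : Measure Ω) (ξ : Ω → EReal) : Prop :=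
  (∫⁻ ω, ePos (ξ ω) ∂μ) ≠ ⊤ ∨ (∫⁻ ω, ePos (-(ξ ω)) ∂μ) ≠ ⊤

/-- `ξ'` is a version of the `G`-conditional expectation of the extended-real random
variable `ξ`: it is `G`-measurable and satisfies `E[α ξ'] = E[α ξ]` for every bounded
nonnegative `G`-measurable real `α`. -/
def IsCondExpER {mΩ : MeasurableSpace Ω} (μ : Measure Ω) (G : MeasurableSpace Ω)
    (ξ ξ' : Ω → EReal) : Prop :=
  Measurable[G] ξ' ∧
  ∀ α : Ω → ℝ, Measurable[G] α → (∀ ω, 0 ≤ α ω) → (∃ C, ∀ ω, α ω ≤ C) →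
    EInt μ (fun ω => (α ω : EReal) * ξ' ω) = EInt μ (fun ω => (α ω : EReal) * ξ ω)

/-- A normal integrand with respect to the σ-algebra `m` on `Ω`: a jointly measurable
function (with respect to `B(E) ⊗ m`) with values in `ℝ ∪ {+∞}` which is lower
semicontinuous in its first argument. -/
def IsNormalIntegrand {E : Type*} [TopologicalSpace E] [MeasurableSpace E]
    (m : MeasurableSpace Ω) (h : E → Ω → EReal) : Prop :=
  Measurable[MeasurableSpace.prod inferInstance m] (fun p : E × Ω => h p.1 p.2) ∧
  (∀ ω, LowerSemicontinuous fun x => h x ω) ∧ ∀ x ω, h x ω ≠ ⊥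

/-- `h` is L-bounded: `h(x,ω) ≥ -ρ(ω)‖x‖ - m(ω)` for integrable nonnegative `ρ, m`. -/
def LBounded {E : Type*} [NormedAddCommGroup E] {mΩ : MeasurableSpace Ω} (μ : Measure Ω)
    (h : E → Ω → EReal) : Prop :=
  ∃ ρ m : Ω → ℝ, Integrable ρ μ ∧ Integrable m μ ∧ (∀ ω, 0 ≤ ρ ω) ∧ (∀ ω, 0 ≤ m ω) ∧
    ∀ᵐ ω ∂μ, ∀ x : E, (↑(-(ρ ω * ‖x‖ + m ω)) : EReal) ≤ h x ω

/-- `hG` is a `G`-conditional expectation of the normal integrand `h`: it is a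
`B(E) ⊗ G`-measurable normal integrand such that `hG(x(·),·)` is a version of the
`G`-conditional expectation of `h(x(·),·)` for every `G`-measurable `x` for which
`h(x(·),·)` is quasi-integrable. -/
def IsCondNI {E : Type*} [TopologicalSpace E] [MeasurableSpace E] {mΩ : MeasurableSpace Ω}
    (μ : Measure Ω) (G : MeasurableSpace Ω) (h hG : E → Ω → EReal) : Prop :=
  IsNormalIntegrand G hG ∧
  ∀ x : Ω → E, Measurable[G] x → QuasiIntegrable μ (fun ω => h (x ω) ω) →
    IsCondExpER μ G (fun ω => h (x ω) ω) (fun ω => hG (x ω) ω)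

/-- The recession function of `g`: `g^∞(y) = sup_{r>0} (g(z + r y) - g(z))/r`, where `z`
is any point with `g(z) < ∞` (for a proper lsc convex function the value does not depend
on the choice of `z`; we take the infimum over all such `z`). -/
def recessionFn {E : Type*} [AddCommGroup E] [Module ℝ E] (g : E → EReal) (y : E) : EReal :=
  ⨅ z : {z : E // g z < ⊤}, ⨆ r : {r : ℝ // 0 < r},
    ((r.1⁻¹ : ℝ) : EReal) * (g (z.1 + r.1 • y) - g z.1)

/-- Convexity of an extended-real-valued function. -/
def ConvexEFn {E : Type*} [AddCommGroup E] [Module ℝ E] (g : E → EReal) : Prop :=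
  ∀ x y : E, ∀ a b : ℝ, 0 ≤ a → 0 ≤ b → a + b = 1 →
    g (a • x + b • y) ≤ (a : EReal) * g x + (b : EReal) * g y

/-- A convex integrand: `h(·,ω)` is convex for every `ω`. -/
def ConvexIntegrand {E : Type*} [AddCommGroup E] [Module ℝ E]
    (h : E → Ω → EReal) : Prop :=
  ∀ ω, ConvexEFn (fun x => h x ω)

end PaperDP

open Filter Topology
open scoped NNReal

namespace EReal

theorem neg_iSup {ι : Sort*} (f : ι → EReal) : -(⨆ i, f i) = ⨅ i, -f i :=
  negOrderIso.map_iSup f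

theorem coe_mul_iSup {ι : Sort*} [Nonempty ι] {c : ℝ} (hc : 0 ≤ c) (f : ι → EReal) :
    (c : EReal) * (⨆ i, f i) = ⨆ i, (c : EReal) * f i := by
  rcases hc.eq_or_lt with rfl | hc
  · simp
  have hc' : (0 : EReal) < c := by exact_mod_cast hc
  refine le_antisymm ?_ (iSup_le fun i => mul_le_mul_of_nonneg_left (le_iSup f i) hc'.le)
  rw [mul_comm, ← EReal.le_div_iff_mul_le hc' (coe_ne_top c)]
  refine iSup_le fun i => ?_
  rw [EReal.le_div_iff_mul_le hc' (coe_ne_top c), mul_comm]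
  exact le_iSup (fun i => (c : EReal) * f i) i

theorem toENNReal_iSup {ι : Sort*} (f : ι → EReal) :
    (⨆ i, f i).toENNReal = ⨆ i, (f i).toENNReal :=
  Monotone.map_iSup_of_continuousAt continuous_toENNReal.continuousAt
    (fun _ _ => toENNReal_le_toENNReal) toENNReal_bot

theorem toENNReal_iInf {ι : Sort*} (f : ι → EReal) :
    (⨅ i, f i).toENNReal = ⨅ i, (f i).toENNReal :=
  Monotone.map_iInf_of_continuousAt continuous_toENNReal.continuousAt
    (fun _ _ => toENNReal_le_toENNReal) toENNReal_top

theorem coe_ennreal_sub_ne_top {a : ℝ≥0∞} (ha : a ≠ ⊤) (b : ℝ≥0∞) : (a : EReal) - b ≠ ⊤ := by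
  lift a to ℝ≥0 using ha
  induction b using ENNReal.recTopCoe <;> simp [coe_nnreal_eq_coe_real, ← coe_sub]

theorem coe_ennreal_sub_eq_iff {a b c d : ℝ≥0∞} (ha : a ≠ ⊤) (hc : c ≠ ⊤) :
    (a : EReal) - b = c - d ↔ a + d = c + b := by
  lift a to ℝ≥0 using ha
  lift c to ℝ≥0 using hc
  induction b using ENNReal.recTopCoe <;> induction d using ENNReal.recTopCoe
  · simp
  · simp [coe_nnreal_eq_coe_real, ← coe_sub]
  · simp [coe_nnreal_eq_coe_real, ← coe_sub, eq_comm (a := ⊤)]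
  · simp only [coe_nnreal_eq_coe_real, ← coe_sub, EReal.coe_eq_coe_iff, ← ENNReal.coe_add,
      ENNReal.coe_inj, ← NNReal.coe_inj, NNReal.coe_add]
    constructor <;> intro h <;> linarith

end EReal

theorem EReal.toENNReal_indicator {Ω : Type*} (s : Set Ω) (f : Ω → EReal) (ω : Ω) :
    (s.indicator f ω).toENNReal = s.indicator (fun ω => (f ω).toENNReal) ω := by
  by_cases h : ω ∈ s <;> simp [h]

theorem EReal.neg_indicator {Ω : Type*} (s : Set Ω) (f : Ω → EReal) (ω : Ω) :
    -s.indicator f ω = s.indicator (fun ω => -f ω) ω := by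
  by_cases h : ω ∈ s <;> simp [h]

theorem MeasureTheory.tendsto_lintegral_indicator {Ω : Type*} {mΩ : MeasurableSpace Ω}
    {μ : Measure Ω} {A : ℕ → Set Ω} (hA : Monotone A) (hAm : ∀ k, MeasurableSet (A k))
    (hcover : ⋃ k, A k = Set.univ) (g : Ω → ℝ≥0∞) :
    Tendsto (fun k => ∫⁻ ω, (A k).indicator g ω ∂μ) atTop (𝓝 (∫⁻ ω, g ω ∂μ)) := by
  rw [← setLIntegral_univ, ← hcover, setLIntegral_iUnion_of_directed _ hA.directed_le]
  simp only [lintegral_indicator (hAm _)]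
  exact tendsto_atTop_iSup fun k l hkl => lintegral_mono_set (hA hkl)

namespace PaperDP

variable {Ω : Type*} {mΩ : MeasurableSpace Ω} {μ : Measure Ω}

-- `ePos` is definitionally `EReal.toENNReal`, whose API is used from here on.
theorem EInt_eq_ite (ξ : Ω → EReal) :
    EInt μ ξ = if ∫⁻ ω, (ξ ω).toENNReal ∂μ = ⊤ then ⊤ else
      (∫⁻ ω, (ξ ω).toENNReal ∂μ : EReal) - (∫⁻ ω, (-ξ ω).toENNReal ∂μ : ℝ≥0∞) :=
  rfl

theorem EInt_le_lintegral (ξ : Ω → EReal) : EInt μ ξ ≤ (∫⁻ ω, (ξ ω).toENNReal ∂μ : ℝ≥0∞) := by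
  rw [EInt_eq_ite]
  split_ifs with hP
  · simp [hP]
  · simpa using EReal.sub_le_sub le_rfl (EReal.coe_ennreal_nonneg _)

theorem neg_lintegral_le_EInt (ξ : Ω → EReal) :
    -((∫⁻ ω, (-ξ ω).toENNReal ∂μ : ℝ≥0∞) : EReal) ≤ EInt μ ξ := by
  rw [EInt_eq_ite]
  split_ifs
  · exact le_top
  · simpa using EReal.sub_le_sub (EReal.coe_ennreal_nonneg _) le_rfl

theorem EInt_of_nonneg {ξ : Ω → EReal} (hξ : ∀ ω, 0 ≤ ξ ω) :
    EInt μ ξ = (∫⁻ ω, (ξ ω).toENNReal ∂μ : ℝ≥0∞) := by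
  have hN : ∫⁻ ω, (-ξ ω).toENNReal ∂μ = 0 := by
    simp [EReal.toENNReal_of_nonpos, hξ]
  rw [EInt_eq_ite]
  split_ifs with hP
  · simp [hP]
  · simp [hN]

theorem EInt_of_nonpos {ξ : Ω → EReal} (hξ : ∀ ω, ξ ω ≤ 0) :
    EInt μ ξ = -((∫⁻ ω, (-ξ ω).toENNReal ∂μ : ℝ≥0∞) : EReal) := by
  have hP : ∫⁻ ω, (ξ ω).toENNReal ∂μ = 0 := by
    simp [EReal.toENNReal_of_nonpos, hξ]
  simp [EInt_eq_ite, hP]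

theorem EInt_eq_EInt_iff {f g : Ω → EReal}
    (hside : (∫⁻ ω, (f ω).toENNReal ∂μ ≠ ⊤ ∧ ∫⁻ ω, (g ω).toENNReal ∂μ ≠ ⊤) ∨
      (∫⁻ ω, (-f ω).toENNReal ∂μ ≠ ⊤ ∧ ∫⁻ ω, (-g ω).toENNReal ∂μ ≠ ⊤)) :
    EInt μ f = EInt μ g ↔ ∫⁻ ω, (f ω).toENNReal ∂μ + ∫⁻ ω, (-g ω).toENNReal ∂μ =
      ∫⁻ ω, (g ω).toENNReal ∂μ + ∫⁻ ω, (-f ω).toENNReal ∂μ := by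
  rw [EInt_eq_ite, EInt_eq_ite]
  split_ifs with hf hg hg
  · simp [hf, hg]
  · have hN := hside.resolve_left (by simp [hf])
    simp [hf, eq_comm (a := ⊤), EReal.coe_ennreal_sub_ne_top hg, ENNReal.add_eq_top, hg, hN.1]
  · have hN := hside.resolve_left (by simp [hg])
    simp [hg, EReal.coe_ennreal_sub_ne_top hf, ENNReal.add_eq_top, hf, hN.2]
  · exact EReal.coe_ennreal_sub_eq_iff hf hg

theorem EInt_mono {f g : Ω → EReal} (hfg : ∀ᵐ ω ∂μ, f ω ≤ g ω) : EInt μ f ≤ EInt μ g := by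
  have hP : ∫⁻ ω, (f ω).toENNReal ∂μ ≤ ∫⁻ ω, (g ω).toENNReal ∂μ :=
    lintegral_mono_ae (hfg.mono fun ω h => EReal.toENNReal_le_toENNReal h)
  have hN : ∫⁻ ω, (-g ω).toENNReal ∂μ ≤ ∫⁻ ω, (-f ω).toENNReal ∂μ :=
    lintegral_mono_ae (hfg.mono fun ω h => EReal.toENNReal_le_toENNReal (EReal.neg_le_neg_iff.2 h))
  rw [EInt_eq_ite, EInt_eq_ite]
  split_ifs with hf hg hg
  · exact le_rfl
  · exact absurd (top_le_iff.1 (hf ▸ hP)) hg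
  · exact le_top
  · exact EReal.sub_le_sub (by exact_mod_cast hP) (by exact_mod_cast hN)

theorem EInt_coe_of_integrable {f : Ω → ℝ} (hf : Integrable f μ) :
    EInt μ (fun ω => (f ω : EReal)) = ((∫ ω, f ω ∂μ : ℝ) : EReal) := by
  have hP := hf.lintegral_lt_top.ne
  have hN := hf.neg.lintegral_lt_top.ne
  simp only [Pi.neg_apply] at hN
  rw [integral_eq_lintegral_pos_part_sub_lintegral_neg_part hf, EReal.coe_sub,
    EReal.coe_ennreal_toReal hP, EReal.coe_ennreal_toReal hN, EInt_eq_ite]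
  simp [hP, ← EReal.coe_neg]

theorem tendsto_lintegral_toENNReal_iSup {w : ℕ → Ω → EReal} (hw : ∀ ν, Measurable (w ν))
    (hmono : ∀ᵐ ω ∂μ, Monotone fun ν => w ν ω) :
    Tendsto (fun ν => ∫⁻ ω, (w ν ω).toENNReal ∂μ) atTop
      (𝓝 (∫⁻ ω, (⨆ ν, w ν ω).toENNReal ∂μ)) := by
  simp only [EReal.toENNReal_iSup]
  rw [lintegral_iSup' (fun ν => (hw ν).ereal_toENNReal.aemeasurable)
    (hmono.mono fun ω h _ _ hij => EReal.toENNReal_le_toENNReal (h hij))]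
  exact tendsto_atTop_iSup fun _ _ hij =>
    lintegral_mono_ae (hmono.mono fun ω h => EReal.toENNReal_le_toENNReal (h hij))

theorem tendsto_lintegral_toENNReal_neg_iSup {w : ℕ → Ω → EReal} (hw : ∀ ν, Measurable (w ν))
    (hmono : ∀ᵐ ω ∂μ, Monotone fun ν => w ν ω) (h0 : ∫⁻ ω, (-w 0 ω).toENNReal ∂μ ≠ ⊤) :
    Tendsto (fun ν => ∫⁻ ω, (-w ν ω).toENNReal ∂μ) atTop
      (𝓝 (∫⁻ ω, (-⨆ ν, w ν ω).toENNReal ∂μ)) := by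
  have hanti : ∀ᵐ ω ∂μ, Antitone fun ν => (-w ν ω).toENNReal :=
    hmono.mono fun ω h _ _ hij => EReal.toENNReal_le_toENNReal (EReal.neg_le_neg_iff.2 (h hij))
  simp only [EReal.neg_iSup, EReal.toENNReal_iInf]
  rw [lintegral_iInf_ae (f := fun ν ω => (-w ν ω).toENNReal) (fun ν => (hw ν).neg.ereal_toENNReal)
    (fun ν => hanti.mono fun ω h => h (Nat.le_succ ν)) h0]
  exact tendsto_atTop_iInf fun _ _ hij => lintegral_mono_ae (hanti.mono fun ω h => h hij)

theorem EInt_iSup_eq_of_EInt_eq {u v : ℕ → Ω → EReal}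
    (hu : ∀ ν, Measurable (u ν)) (hv : ∀ ν, Measurable (v ν))
    (hu_mono : ∀ᵐ ω ∂μ, Monotone fun ν => u ν ω) (hv_mono : ∀ᵐ ω ∂μ, Monotone fun ν => v ν ω)
    (hu0 : ∫⁻ ω, (-u 0 ω).toENNReal ∂μ ≠ ⊤) (hv0 : ∫⁻ ω, (-v 0 ω).toENNReal ∂μ ≠ ⊤)
    (heq : ∀ ν, EInt μ (u ν) = EInt μ (v ν)) :
    EInt μ (fun ω => ⨆ ν, u ν ω) = EInt μ (fun ω => ⨆ ν, v ν ω) := by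
  have hneg_fin : ∀ {w : ℕ → Ω → EReal}, (∀ᵐ ω ∂μ, Monotone fun ν => w ν ω) →
      ∫⁻ ω, (-w 0 ω).toENNReal ∂μ ≠ ⊤ → ∀ ν, ∫⁻ ω, (-w ν ω).toENNReal ∂μ ≠ ⊤ :=
    fun hw h0 ν => ne_top_of_le_ne_top h0 <| lintegral_mono_ae <| hw.mono fun ω h =>
      EReal.toENNReal_le_toENNReal (EReal.neg_le_neg_iff.2 (h (Nat.zero_le ν)))
  have hneg_sup_fin : ∀ {w : ℕ → Ω → EReal}, ∫⁻ ω, (-w 0 ω).toENNReal ∂μ ≠ ⊤ →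
      ∫⁻ ω, (-⨆ ν, w ν ω).toENNReal ∂μ ≠ ⊤ :=
    fun {w} h0 => ne_top_of_le_ne_top h0 <| lintegral_mono fun ω =>
      EReal.toENNReal_le_toENNReal (EReal.neg_le_neg_iff.2 (le_iSup (fun ν => w ν ω) 0))
  have hk : ∀ ν, ∫⁻ ω, (u ν ω).toENNReal ∂μ + ∫⁻ ω, (-v ν ω).toENNReal ∂μ =
      ∫⁻ ω, (v ν ω).toENNReal ∂μ + ∫⁻ ω, (-u ν ω).toENNReal ∂μ := fun ν =>
    (EInt_eq_EInt_iff (Or.inr ⟨hneg_fin hu_mono hu0 ν, hneg_fin hv_mono hv0 ν⟩)).1 (heq ν)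
  refine (EInt_eq_EInt_iff (Or.inr ⟨hneg_sup_fin hu0, hneg_sup_fin hv0⟩)).2 ?_
  refine tendsto_nhds_unique ((tendsto_lintegral_toENNReal_iSup hu hu_mono).add
    (tendsto_lintegral_toENNReal_neg_iSup hv hv_mono hv0)) ?_
  simpa only [hk] using (tendsto_lintegral_toENNReal_iSup hv hv_mono).add
    (tendsto_lintegral_toENNReal_neg_iSup hu hu_mono hu0)

theorem EInt_eq_of_EInt_indicator_eq {f g : Ω → EReal} {A : ℕ → Set Ω} (hA : Monotone A)
    (hAm : ∀ k, MeasurableSet (A k)) (hcover : ⋃ k, A k = Set.univ)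
    (hside : (∫⁻ ω, (f ω).toENNReal ∂μ ≠ ⊤ ∧ ∫⁻ ω, (g ω).toENNReal ∂μ ≠ ⊤) ∨
      (∫⁻ ω, (-f ω).toENNReal ∂μ ≠ ⊤ ∧ ∫⁻ ω, (-g ω).toENNReal ∂μ ≠ ⊤))
    (heq : ∀ k, EInt μ ((A k).indicator f) = EInt μ ((A k).indicator g)) :
    EInt μ f = EInt μ g := by
  have hpos : ∀ w : Ω → EReal, Tendsto (fun k => ∫⁻ ω, ((A k).indicator w ω).toENNReal ∂μ)
      atTop (𝓝 (∫⁻ ω, (w ω).toENNReal ∂μ)) := fun w => by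
    simpa only [EReal.toENNReal_indicator] using
      tendsto_lintegral_indicator hA hAm hcover fun ω => (w ω).toENNReal
  have hneg : ∀ w : Ω → EReal, Tendsto (fun k => ∫⁻ ω, (-(A k).indicator w ω).toENNReal ∂μ)
      atTop (𝓝 (∫⁻ ω, (-w ω).toENNReal ∂μ)) := fun w => by
    simpa only [EReal.neg_indicator, EReal.toENNReal_indicator] using
      tendsto_lintegral_indicator hA hAm hcover fun ω => (-w ω).toENNReal
  have hpos_le : ∀ (w : Ω → EReal) k, ∫⁻ ω, ((A k).indicator w ω).toENNReal ∂μ ≤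
      ∫⁻ ω, (w ω).toENNReal ∂μ := fun w k => by
    simpa only [EReal.toENNReal_indicator] using
      lintegral_mono (Set.indicator_le_self (A k) fun ω => (w ω).toENNReal)
  have hneg_le : ∀ (w : Ω → EReal) k, ∫⁻ ω, (-(A k).indicator w ω).toENNReal ∂μ ≤
      ∫⁻ ω, (-w ω).toENNReal ∂μ := fun w k => by
    simpa only [EReal.neg_indicator, EReal.toENNReal_indicator] using
      lintegral_mono (Set.indicator_le_self (A k) fun ω => (-w ω).toENNReal)
  have hk : ∀ k, ∫⁻ ω, ((A k).indicator f ω).toENNReal ∂μ +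
      ∫⁻ ω, (-(A k).indicator g ω).toENNReal ∂μ =
      ∫⁻ ω, ((A k).indicator g ω).toENNReal ∂μ +
      ∫⁻ ω, (-(A k).indicator f ω).toENNReal ∂μ := fun k => by
    refine (EInt_eq_EInt_iff ?_).1 (heq k)
    exact hside.imp
      (fun h => ⟨ne_top_of_le_ne_top h.1 (hpos_le f k), ne_top_of_le_ne_top h.2 (hpos_le g k)⟩)
      (fun h => ⟨ne_top_of_le_ne_top h.1 (hneg_le f k), ne_top_of_le_ne_top h.2 (hneg_le g k)⟩)
  refine (EInt_eq_EInt_iff hside).2 (tendsto_nhds_unique ((hpos f).add (hneg g)) ?_)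
  simpa only [hk] using (hpos g).add (hneg f)

structure IsTestWeight (G : MeasurableSpace Ω) (α : Ω → ℝ) : Prop where
  measurable : Measurable[G] α
  nonneg : ∀ ω, 0 ≤ α ω
  bddAbove : ∃ C, ∀ ω, α ω ≤ C

theorem isTestWeight_one (G : MeasurableSpace Ω) : IsTestWeight G (1 : Ω → ℝ) :=
  ⟨measurable_const, fun _ => zero_le_one, ⟨1, fun _ => le_rfl⟩⟩

theorem IsTestWeight.indicator {G : MeasurableSpace Ω} {α : Ω → ℝ} (hα : IsTestWeight G α)
    {s : Set Ω} (hs : MeasurableSet[G] s) : IsTestWeight G (s.indicator α) := by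
  obtain ⟨C, hC⟩ := hα.bddAbove
  refine ⟨hα.measurable.indicator hs, Set.indicator_nonneg fun ω _ => hα.nonneg ω,
    ⟨max C 0, fun ω => ?_⟩⟩
  by_cases h : ω ∈ s <;> simp [h, hC ω]

theorem IsTestWeight.lintegral_toENNReal_mul_ne_top {G : MeasurableSpace Ω} {α : Ω → ℝ}
    (hα : IsTestWeight G α) {ξ : Ω → EReal} (hξ : ∫⁻ ω, (ξ ω).toENNReal ∂μ ≠ ⊤) :
    ∫⁻ ω, ((α ω : EReal) * ξ ω).toENNReal ∂μ ≠ ⊤ := by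
  obtain ⟨C, hC⟩ := hα.bddAbove
  refine ne_top_of_le_ne_top (ENNReal.mul_ne_top (ofReal_ne_top (r := C)) hξ) ?_
  calc ∫⁻ ω, ((α ω : EReal) * ξ ω).toENNReal ∂μ
      = ∫⁻ ω, ENNReal.ofReal (α ω) * (ξ ω).toENNReal ∂μ := by
        simp [EReal.toENNReal_mul (EReal.coe_nonneg.2 (hα.nonneg _))]
    _ ≤ ∫⁻ ω, ENNReal.ofReal C * (ξ ω).toENNReal ∂μ :=
        lintegral_mono fun ω => mul_le_mul_left (ofReal_le_ofReal (hC ω)) _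
    _ = ENNReal.ofReal C * ∫⁻ ω, (ξ ω).toENNReal ∂μ := lintegral_const_mul' _ _ ofReal_ne_top

theorem IsTestWeight.lintegral_toENNReal_neg_mul_ne_top {G : MeasurableSpace Ω} {α : Ω → ℝ}
    (hα : IsTestWeight G α) {ξ : Ω → EReal} (hξ : ∫⁻ ω, (-ξ ω).toENNReal ∂μ ≠ ⊤) :
    ∫⁻ ω, (-((α ω : EReal) * ξ ω)).toENNReal ∂μ ≠ ⊤ := by
  simpa only [mul_neg] using hα.lintegral_toENNReal_mul_ne_top (ξ := fun ω => -ξ ω) hξ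

theorem coe_mul_indicator (s : Set Ω) (α : Ω → ℝ) (ξ : Ω → EReal) (ω : Ω) :
    (α ω : EReal) * s.indicator ξ ω = ((s.indicator α ω : ℝ) : EReal) * ξ ω := by
  by_cases h : ω ∈ s <;> simp [h]

theorem coe_indicator_one_mul (s : Set Ω) (ξ : Ω → EReal) (ω : Ω) :
    ((s.indicator (1 : Ω → ℝ) ω : ℝ) : EReal) * ξ ω = s.indicator ξ ω := by
  by_cases h : ω ∈ s <;> simp [h]

theorem ae_le_of_EInt_mul_le [IsFiniteMeasure μ] {G : MeasurableSpace Ω} (hG : G ≤ mΩ)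
    {u v : Ω → EReal} (hu : Measurable[G] u) (hv : Measurable[G] v)
    (H : ∀ α, IsTestWeight G α → EInt μ (fun ω => (α ω : EReal) * u ω) ≤
      EInt μ (fun ω => (α ω : EReal) * v ω)) :
    u ≤ᵐ[μ] v := by
  have hnull : ∀ q q' : ℚ, q < q' → μ {ω | v ω < (q : ℝ) ∧ ((q' : ℝ) : EReal) < u ω} = 0 := by
    intro q q' hqq'
    set S := {ω | v ω < (q : ℝ) ∧ ((q' : ℝ) : EReal) < u ω}
    have hSG : MeasurableSet[G] S := (hv measurableSet_Iio).inter (hu measurableSet_Ioi)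
    have hEInt : ∀ r : ℝ, EInt μ (fun ω => ((S.indicator (fun _ => r) ω : ℝ) : EReal)) =
        ((r * μ.real S : ℝ) : EReal) := fun r => by
      rw [EInt_coe_of_integrable ((integrable_const r).indicator (hG _ hSG)),
        integral_indicator_const _ (hG _ hSG), smul_eq_mul, mul_comm]
    set α := S.indicator (1 : Ω → ℝ)
    have key : ((q' * μ.real S : ℝ) : EReal) ≤ ((q * μ.real S : ℝ) : EReal) := calc
      _ = EInt μ (fun ω => ((S.indicator (fun _ => (q' : ℝ)) ω : ℝ) : EReal)) := (hEInt _).symm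
      _ ≤ EInt μ (fun ω => (α ω : EReal) * u ω) := EInt_mono <| Eventually.of_forall fun ω => by
        by_cases h : ω ∈ S
        · simpa [α, h] using h.2.le
        · simp [α, h]
      _ ≤ EInt μ (fun ω => (α ω : EReal) * v ω) := H α ((isTestWeight_one G).indicator hSG)
      _ ≤ EInt μ (fun ω => ((S.indicator (fun _ => (q : ℝ)) ω : ℝ) : EReal)) :=
        EInt_mono <| Eventually.of_forall fun ω => by
          by_cases h : ω ∈ S
          · simpa [α, h] using h.1.le
          · simp [α, h]
      _ = _ := hEInt _
    have hq : (q : ℝ) < q' := by exact_mod_cast hqq'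
    have hS : μ.real S = 0 := by
      have := EReal.coe_le_coe_iff.1 key
      nlinarith [measureReal_nonneg (μ := μ) (s := S)]
    exact (measureReal_eq_zero_iff).1 hS
  have hsub : {ω | ¬u ω ≤ v ω} ⊆ ⋃ q : ℚ, ⋃ q' : ℚ, ⋃ _ : q < q',
      {ω | v ω < (q : ℝ) ∧ ((q' : ℝ) : EReal) < u ω} := fun ω hω => by
    obtain ⟨q, hvq, hqu⟩ := EReal.exists_rat_btwn_of_lt (not_le.1 hω)
    obtain ⟨q', hqq', hq'u⟩ := EReal.exists_rat_btwn_of_lt hqu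
    exact Set.mem_iUnion₂.2 ⟨q, q', Set.mem_iUnion.2 ⟨by exact_mod_cast hqq', hvq, hq'u⟩⟩
  exact ae_iff.2 <| measure_mono_null hsub <| measure_iUnion_null fun q =>
    measure_iUnion_null fun q' => measure_iUnion_null fun hqq' => hnull q q' hqq'

variable {G : MeasurableSpace Ω} {ξ ξ' : Ω → EReal}

theorem IsCondExpER.EInt_mul_eq (h : IsCondExpER μ G ξ ξ') {α : Ω → ℝ} (hα : IsTestWeight G α) :
    EInt μ (fun ω => (α ω : EReal) * ξ' ω) = EInt μ (fun ω => (α ω : EReal) * ξ ω) :=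
  h.2 α hα.1 hα.2 hα.3

theorem IsCondExpER.indicator (h : IsCondExpER μ G ξ ξ') {s : Set Ω} (hs : MeasurableSet[G] s) :
    IsCondExpER μ G (s.indicator ξ) (s.indicator ξ') :=
  ⟨h.1.indicator hs, fun α h₁ h₂ h₃ => by
    simpa only [coe_mul_indicator] using h.EInt_mul_eq (IsTestWeight.indicator ⟨h₁, h₂, h₃⟩ hs)⟩

theorem IsCondExpER.lintegral_toENNReal_le (h : IsCondExpER μ G ξ ξ') :
    ∫⁻ ω, (ξ' ω).toENNReal ∂μ ≤ ∫⁻ ω, (ξ ω).toENNReal ∂μ := by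
  set S := {ω | 0 < ξ' ω}
  have hS : MeasurableSet[G] S := h.1 measurableSet_Ioi
  have key := h.EInt_mul_eq ((isTestWeight_one G).indicator hS)
  simp only [coe_indicator_one_mul] at key
  have hξ' : ∫⁻ ω, (ξ' ω).toENNReal ∂μ = ∫⁻ ω, (S.indicator ξ' ω).toENNReal ∂μ :=
    lintegral_congr fun ω => by
      by_cases hω : ω ∈ S
      · simp [hω]
      · simp [hω, EReal.toENNReal_of_nonpos (not_lt.1 hω)]
  have hnonneg : ∀ ω, 0 ≤ S.indicator ξ' ω := fun ω => by
    by_cases hω : ω ∈ S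
    · simpa [hω] using (show 0 < ξ' ω from hω).le
    · simp [hω]
  rw [hξ', ← EReal.coe_ennreal_le_coe_ennreal_iff, ← EInt_of_nonneg hnonneg, key]
  refine (EInt_le_lintegral _).trans (EReal.coe_ennreal_le_coe_ennreal_iff.2 ?_)
  simpa only [EReal.toENNReal_indicator] using
    lintegral_mono (Set.indicator_le_self S fun ω => (ξ ω).toENNReal)

theorem IsCondExpER.lintegral_toENNReal_neg_le (h : IsCondExpER μ G ξ ξ') :
    ∫⁻ ω, (-ξ' ω).toENNReal ∂μ ≤ ∫⁻ ω, (-ξ ω).toENNReal ∂μ := by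
  set S := {ω | ξ' ω < 0}
  have hS : MeasurableSet[G] S := h.1 measurableSet_Iio
  have key := h.EInt_mul_eq ((isTestWeight_one G).indicator hS)
  simp only [coe_indicator_one_mul] at key
  have hξ' : ∫⁻ ω, (-ξ' ω).toENNReal ∂μ = ∫⁻ ω, (-S.indicator ξ' ω).toENNReal ∂μ :=
    lintegral_congr fun ω => by
      by_cases hω : ω ∈ S
      · simp [hω]
      · simp [hω, EReal.toENNReal_of_nonpos (EReal.neg_le.2 (by simpa using not_lt.1 hω))]
  have hnonpos : ∀ ω, S.indicator ξ' ω ≤ 0 := fun ω => by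
    by_cases hω : ω ∈ S
    · simpa [hω] using (show ξ' ω < 0 from hω).le
    · simp [hω]
  rw [hξ', ← EReal.coe_ennreal_le_coe_ennreal_iff, ← EReal.neg_le_neg_iff,
    ← EInt_of_nonpos hnonpos, key]
  refine le_trans (EReal.neg_le_neg_iff.2 (EReal.coe_ennreal_le_coe_ennreal_iff.2 ?_))
    (neg_lintegral_le_EInt _)
  simpa only [EReal.neg_indicator, EReal.toENNReal_indicator] using
    lintegral_mono (Set.indicator_le_self S fun ω => (-ξ ω).toENNReal)

theorem IsCondExpER.ae_le [IsFiniteMeasure μ] (hG : G ≤ mΩ) {η η' : Ω → EReal}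
    (h : IsCondExpER μ G ξ ξ') (hη : IsCondExpER μ G η η') (hle : ∀ ω, ξ ω ≤ η ω) :
    ξ' ≤ᵐ[μ] η' :=
  ae_le_of_EInt_mul_le hG h.1 hη.1 fun α hα => by
    rw [h.EInt_mul_eq hα, hη.EInt_mul_eq hα]
    exact EInt_mono (Eventually.of_forall fun ω =>
      mul_le_mul_of_nonneg_left (hle ω) (EReal.coe_nonneg.2 (hα.nonneg ω)))

theorem IsCondExpER.iSup [IsFiniteMeasure μ] (hG : G ≤ mΩ) {ξ ξ' : ℕ → Ω → EReal}
    (hξ : ∀ ν, Measurable[mΩ] (ξ ν)) (hmono : ∀ ν ω, ξ ν ω ≤ ξ (ν + 1) ω)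
    (hξ₀ : ∫⁻ ω, (-ξ 0 ω).toENNReal ∂μ ≠ ⊤) (hce : ∀ ν, IsCondExpER μ G (ξ ν) (ξ' ν)) :
    IsCondExpER μ G (fun ω => ⨆ ν, ξ ν ω) (fun ω => ⨆ ν, ξ' ν ω) := by
  have hmono' : ∀ᵐ ω ∂μ, Monotone fun ν => ξ' ν ω := by
    have := ae_all_iff.2 fun ν => (hce ν).ae_le hG (hce (ν + 1)) (hmono ν)
    exact this.mono fun ω h => monotone_nat_of_le_succ h
  have hξ'₀ : ∫⁻ ω, (-ξ' 0 ω).toENNReal ∂μ ≠ ⊤ :=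
    ne_top_of_le_ne_top hξ₀ (hce 0).lintegral_toENNReal_neg_le
  refine ⟨Measurable.iSup fun ν => (hce ν).1, fun α h₁ h₂ h₃ => ?_⟩
  have hα : IsTestWeight G α := ⟨h₁, h₂, h₃⟩
  have hαm : Measurable[mΩ] fun ω => (α ω : EReal) := (h₁.mono hG le_rfl).coe_real_ereal
  have hα₀ : ∀ ω, (0 : EReal) ≤ α ω := fun ω => EReal.coe_nonneg.2 (h₂ ω)
  simp only [EReal.coe_mul_iSup (h₂ _)]
  exact EInt_iSup_eq_of_EInt_eq (fun ν => hαm.mul ((hce ν).1.mono hG le_rfl))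
    (fun ν => hαm.mul (hξ ν))
    (hmono'.mono fun ω h _ _ hij => mul_le_mul_of_nonneg_left (h hij) (hα₀ ω))
    (Eventually.of_forall fun ω _ _ hij =>
      mul_le_mul_of_nonneg_left (monotone_nat_of_le_succ (hmono · ω) hij) (hα₀ ω))
    (hα.lintegral_toENNReal_neg_mul_ne_top hξ'₀) (hα.lintegral_toENNReal_neg_mul_ne_top hξ₀)
    fun ν => (hce ν).EInt_mul_eq hα

theorem IsCondExpER.of_indicator {A : ℕ → Set Ω} (hG : G ≤ mΩ) (hA : Monotone A)
    (hAG : ∀ k, MeasurableSet[G] (A k)) (hcover : ⋃ k, A k = Set.univ)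
    (hξ' : Measurable[G] ξ') (hξ : QuasiIntegrable μ ξ)
    (hloc : ∀ k, IsCondExpER μ G ((A k).indicator ξ) ((A k).indicator ξ')) :
    IsCondExpER μ G ξ ξ' := by
  have hAm : ∀ k, MeasurableSet[mΩ] (A k) := fun k => hG _ (hAG k)
  have hpos : ∫⁻ ω, (ξ' ω).toENNReal ∂μ ≤ ∫⁻ ω, (ξ ω).toENNReal ∂μ :=
    le_of_tendsto' (tendsto_lintegral_indicator hA hAm hcover _) fun k => by
      have h := (hloc k).lintegral_toENNReal_le
      simp only [EReal.toENNReal_indicator] at h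
      exact h.trans (lintegral_mono (Set.indicator_le_self _ _))
  have hneg : ∫⁻ ω, (-ξ' ω).toENNReal ∂μ ≤ ∫⁻ ω, (-ξ ω).toENNReal ∂μ :=
    le_of_tendsto' (tendsto_lintegral_indicator hA hAm hcover _) fun k => by
      have h := (hloc k).lintegral_toENNReal_neg_le
      simp only [EReal.neg_indicator, EReal.toENNReal_indicator] at h
      exact h.trans (lintegral_mono (Set.indicator_le_self _ _))
  refine ⟨hξ', fun α h₁ h₂ h₃ => ?_⟩
  have hα : IsTestWeight G α := ⟨h₁, h₂, h₃⟩
  refine EInt_eq_of_EInt_indicator_eq hA hAm hcover ?_ fun k => ?_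
  · exact hξ.imp
      (fun h => ⟨hα.lintegral_toENNReal_mul_ne_top (ne_top_of_le_ne_top h hpos),
        hα.lintegral_toENNReal_mul_ne_top h⟩)
      (fun h => ⟨hα.lintegral_toENNReal_neg_mul_ne_top (ne_top_of_le_ne_top h hneg),
        hα.lintegral_toENNReal_neg_mul_ne_top h⟩)
  · have h_ind : ∀ f : Ω → EReal, (A k).indicator (fun ω => (α ω : EReal) * f ω) =
        fun ω => (α ω : EReal) * (A k).indicator f ω :=
      fun f => funext fun ω => Set.indicator_mul_right _ _ _
    rw [h_ind, h_ind]
    exact (hloc k).EInt_mul_eq hα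

theorem IsNormalIntegrand.iSup {E : Type*} [TopologicalSpace E] [MeasurableSpace E]
    {m : MeasurableSpace Ω} {ι : Sort*} [Countable ι] [Nonempty ι] {h : ι → E → Ω → EReal}
    (hh : ∀ i, IsNormalIntegrand m (h i)) : IsNormalIntegrand m fun x ω => ⨆ i, h i x ω :=
  ⟨Measurable.iSup fun i => (hh i).1, fun ω => lowerSemicontinuous_iSup fun i => (hh i).2.1 ω,
    fun x ω => ne_bot_of_le_ne_bot ((hh (Classical.arbitrary ι)).2.2 x ω) (le_iSup (h · x ω) _)⟩

theorem IsNormalIntegrand.measurable_comp {E : Type*} [TopologicalSpace E] [MeasurableSpace E]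
    {m : MeasurableSpace Ω} {h : E → Ω → EReal} (hh : IsNormalIntegrand m h) {x : Ω → E}
    (hx : Measurable[m] x) : Measurable[m] fun ω => h (x ω) ω :=
  hh.1.comp (hx.prodMk measurable_id)

theorem LBounded.lintegral_toENNReal_neg_comp_ne_top {E : Type*} [NormedAddCommGroup E]
    {h : E → Ω → EReal} (hh : LBounded μ h) {y : Ω → E} {c : ℝ} (hy : ∀ ω, ‖y ω‖ ≤ c) :
    ∫⁻ ω, (-h (y ω) ω).toENNReal ∂μ ≠ ⊤ := by
  obtain ⟨ρ, m, hρ, hm, hρ₀, -, hbd⟩ := hh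
  refine ne_top_of_le_ne_top ((hρ.mul_const c).add hm).lintegral_lt_top.ne (lintegral_mono_ae ?_)
  filter_upwards [hbd] with ω hω
  calc (-h (y ω) ω).toENNReal ≤ ((ρ ω * ‖y ω‖ + m ω : ℝ) : EReal).toENNReal :=
        EReal.toENNReal_le_toENNReal (EReal.neg_le.2 (by rw [← EReal.coe_neg]; exact hω (y ω)))
    _ ≤ ENNReal.ofReal (ρ ω * c + m ω) := by
        rw [EReal.real_coe_toENNReal]
        exact ofReal_le_ofReal (by nlinarith [hρ₀ ω, hy ω])

theorem statement2_general {Ω : Type*} {mΩ : MeasurableSpace Ω} (μ : Measure Ω)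
    [IsProbabilityMeasure μ]
    (G : MeasurableSpace Ω) (hG : G ≤ mΩ) (n : ℕ)
    (h : ℕ → EuclideanSpace ℝ (Fin n) → Ω → EReal)
    (hNI : ∀ ν, IsNormalIntegrand mΩ (h ν))
    (hLB : ∀ ν, LBounded μ (h ν))
    (hmono : ∀ ν x ω, h ν x ω ≤ h (ν + 1) x ω)
    (hhat : ℕ → EuclideanSpace ℝ (Fin n) → Ω → EReal)
    (hce : ∀ ν, IsCondNI μ G (h ν) (hhat ν)) :
    IsCondNI μ G (fun x ω => ⨆ ν, h ν x ω) (fun x ω => ⨆ ν, hhat ν x ω) := by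
  refine ⟨IsNormalIntegrand.iSup fun ν => (hce ν).1, fun x hx hξ => ?_⟩
  set A : ℕ → Set Ω := fun k => {ω | ‖x ω‖ ≤ k}
  have hAG : ∀ k, MeasurableSet[G] (A k) := fun k => measurableSet_le hx.norm measurable_const
  have hA : Monotone A := fun k l hkl ω (hω : ‖x ω‖ ≤ k) => hω.trans (Nat.cast_le.2 hkl)
  refine IsCondExpER.of_indicator hG hA hAG
    (Set.iUnion_eq_univ_iff.2 fun ω => exists_nat_ge ‖x ω‖)
    (Measurable.iSup fun ν => (hce ν).1.measurable_comp hx) hξ fun k => ?_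
  set y := (A k).piecewise x 0
  have hy : Measurable[G] y := hx.piecewise (hAG k) measurable_const
  have hyx : Set.EqOn y x (A k) := fun ω hω => Set.piecewise_eq_of_mem _ _ _ hω
  have hy_le : ∀ ω, ‖y ω‖ ≤ k := fun ω => by
    by_cases hω : ω ∈ A k
    · rw [hyx hω]
      exact hω
    · simp [y, hω]
  have hneg ν := (hLB ν).lintegral_toENNReal_neg_comp_ne_top hy_le
  have hce_y := IsCondExpER.iSup hG (fun ν => (hNI ν).measurable_comp (hy.mono hG le_rfl))
    (fun ν ω => hmono ν (y ω) ω) (hneg 0) fun ν => (hce ν).2 y hy (Or.inr (hneg ν))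
  convert hce_y.indicator (hAG k) using 1 <;>
    exact Set.indicator_congr fun ω hω => by simp only [hyx hω]

/-- Theorem 2.6, monotone convergence: if `(h ν)` is a nondecreasing
sequence of L-bounded normal integrands with `G`-conditional expectations `(hhat ν)`,
then `sup_ν hhat ν` is a `G`-conditional expectation of `sup_ν h ν`. -/
theorem statement2 {Ω : Type*} {mΩ : MeasurableSpace Ω} (μ : Measure Ω)
    [IsProbabilityMeasure μ] (hcompl : μ.IsComplete)
    (G : MeasurableSpace Ω) (hG : G ≤ mΩ) (n : ℕ)
    (h : ℕ → EuclideanSpace ℝ (Fin n) → Ω → EReal)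
    (hNI : ∀ ν, IsNormalIntegrand mΩ (h ν))
    (hLB : ∀ ν, LBounded μ (h ν))
    (hmono : ∀ ν x ω, h ν x ω ≤ h (ν + 1) x ω)
    (hhat : ℕ → EuclideanSpace ℝ (Fin n) → Ω → EReal)
    (hce : ∀ ν, IsCondNI μ G (h ν) (hhat ν)) :
    IsCondNI μ G (fun x ω => ⨆ ν, h ν x ω) (fun x ω => ⨆ ν, hhat ν x ω) :=
  statement2_general μ G hG n h hNI hLB hmono hhat hce

end PaperDP
end
end

section
/- Tower property for conditional expectations of normal integrands: let G′ ⊆ G ⊆ F be sub-σ-algebras and h an L-bounded normal integrand on ℝⁿ. If ĥ is a G-conditional expectation of h and h̄ is a G′-conditional expectation of ĥ, then h̄ is a G′-conditional expectation of h. -/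
/-! For a `G'`-measurable `x`, the claim is the tower property of extended-real conditional
expectations applied to `h(x)`, `ĥ(x)`, `h̄(x)`. The one point to check is that `ĥ(x)` is
quasi-integrable, so that `h̄(x)` is indeed its `G'`-conditional expectation: testing against `1`
and against the indicator of `{ĥ(x) ≤ 0}` transfers finiteness of the positive, resp. negative,
part from `h(x)` to `ĥ(x)`. -/

open MeasureTheory ENNReal
open scoped RealInnerProductSpace

noncomputable section

namespace PaperDP

variable {Ω : Type*}

lemma ePos_eq_zero_of_nonpos {x : EReal} (hx : x ≤ 0) : ePos x = 0 := by
  induction x using EReal.rec with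
  | bot => simp [ePos]
  | coe r => simp [ePos, ENNReal.ofReal_eq_zero.2 (EReal.coe_nonpos.1 hx)]
  | top => exact absurd hx (by simp)

section EInt

variable {mΩ : MeasurableSpace Ω} (μ : Measure Ω) (ξ : Ω → EReal)

lemma EInt_eq_top_iff : EInt μ ξ = ⊤ ↔ (∫⁻ ω, ePos (ξ ω) ∂μ) = ⊤ := by
  unfold EInt
  split_ifs with hpos
  · simp [hpos]
  · simp only [hpos, iff_false]
    have hfin : ((∫⁻ ω, ePos (ξ ω) ∂μ : ℝ≥0∞) : EReal) ≠ ⊤ := by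
      simpa [EReal.coe_ennreal_eq_top_iff] using hpos
    rw [sub_eq_add_neg]
    exact (EReal.add_lt_top hfin (by simp [EReal.neg_eq_top_iff])).ne

lemma EInt_ne_bot_iff :
    EInt μ ξ ≠ ⊥ ↔ (∫⁻ ω, ePos (ξ ω) ∂μ) = ⊤ ∨ (∫⁻ ω, ePos (-(ξ ω)) ∂μ) ≠ ⊤ := by
  unfold EInt
  split_ifs with hpos
  · simp [hpos]
  · simp [hpos, sub_eq_add_neg, EReal.add_eq_bot_iff, EReal.neg_eq_bot_iff,
      EReal.coe_ennreal_eq_top_iff]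

end EInt

namespace IsCondExpER

variable {mΩ : MeasurableSpace Ω} {μ : Measure Ω} {G G' : MeasurableSpace Ω}
  {ξ ξ' ξ'' : Ω → EReal}

lemma lintegral_ePos_ne_top (hξ' : IsCondExpER μ G ξ ξ')
    (hξ : (∫⁻ ω, ePos (ξ ω) ∂μ) ≠ ⊤) : (∫⁻ ω, ePos (ξ' ω) ∂μ) ≠ ⊤ := by
  have h1 := hξ'.2 1 measurable_const (fun _ => zero_le_one) ⟨1, fun _ => le_rfl⟩
  simp only [Pi.one_apply, EReal.coe_one, one_mul] at h1
  rwa [Ne, ← EInt_eq_top_iff, h1, EInt_eq_top_iff]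

lemma lintegral_ePos_neg_ne_top (hξ' : IsCondExpER μ G ξ ξ')
    (hξ : (∫⁻ ω, ePos (-(ξ ω)) ∂μ) ≠ ⊤) : (∫⁻ ω, ePos (-(ξ' ω)) ∂μ) ≠ ⊤ := by
  classical
  set A := {ω | ξ' ω ≤ 0}
  have hA : MeasurableSet[G] A := hξ'.1 measurableSet_Iic
  have hmul : ∀ y : Ω → EReal, ∀ ω,
      ((A.indicator (1 : Ω → ℝ) ω : ℝ) : EReal) * y ω = if ω ∈ A then y ω else 0 := by
    intro y ω
    by_cases hω : ω ∈ A <;> simp [hω]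
  have htest := hξ'.2 (A.indicator 1) (measurable_const.indicator hA)
    (fun ω => Set.indicator_nonneg (fun _ _ => zero_le_one) ω)
    ⟨1, fun ω => Set.indicator_le_self' (fun _ _ => zero_le_one) ω⟩
  simp only [hmul] at htest
  have hpos : ∀ ω, ePos (if ω ∈ A then ξ' ω else 0) = 0 := fun ω => by
    split_ifs with hω
    exacts [ePos_eq_zero_of_nonpos hω, ePos_eq_zero_of_nonpos le_rfl]
  have hneg_eq : ∀ ω, ePos (-(if ω ∈ A then ξ' ω else 0)) = ePos (-(ξ' ω)) := fun ω => by
    split_ifs with hω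
    · rfl
    · have hξ'pos : 0 < ξ' ω := not_le.1 hω
      rw [neg_zero, ePos_eq_zero_of_nonpos le_rfl,
        ePos_eq_zero_of_nonpos (EReal.neg_le_zero.2 hξ'pos.le)]
  have hneg_le : ∀ ω, ePos (-(if ω ∈ A then ξ ω else 0)) ≤ ePos (-(ξ ω)) := fun ω => by
    split_ifs
    · rfl
    · simp [ePos_eq_zero_of_nonpos le_rfl]
  have hbot : EInt μ (fun ω => if ω ∈ A then ξ ω else 0) ≠ ⊥ :=
    (EInt_ne_bot_iff μ _).2 <| Or.inr <| ne_top_of_le_ne_top hξ (lintegral_mono hneg_le)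
  rw [← htest, EInt_ne_bot_iff] at hbot
  simpa [hpos, hneg_eq] using hbot

lemma quasiIntegrable (hξ' : IsCondExpER μ G ξ ξ') (hξ : QuasiIntegrable μ ξ) :
    QuasiIntegrable μ ξ' :=
  hξ.imp hξ'.lintegral_ePos_ne_top hξ'.lintegral_ePos_neg_ne_top

lemma trans (hG'G : G' ≤ G) (hξ' : IsCondExpER μ G ξ ξ') (hξ'' : IsCondExpER μ G' ξ' ξ'') :
    IsCondExpER μ G' ξ ξ'' :=
  ⟨hξ''.1, fun α hα hα0 hαC => by
    rw [hξ''.2 α hα hα0 hαC, hξ'.2 α (hα.mono hG'G le_rfl) hα0 hαC]⟩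

end IsCondExpER

theorem statement5_general {Ω : Type*} {mΩ : MeasurableSpace Ω} (μ : Measure Ω)
    (G G' : MeasurableSpace Ω) (hG'G : G' ≤ G) (n : ℕ)
    (h : EuclideanSpace ℝ (Fin n) → Ω → EReal)
    (hhat hbar : EuclideanSpace ℝ (Fin n) → Ω → EReal)
    (hce : IsCondNI μ G h hhat) (hce' : IsCondNI μ G' hhat hbar) :
    IsCondNI μ G' h hbar := by
  refine ⟨hce'.1, fun x hx hξ => ?_⟩
  have hceG := hce.2 x (hx.mono hG'G le_rfl) hξ
  exact hceG.trans hG'G (hce'.2 x hx (hceG.quasiIntegrable hξ))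

/-- Theorem 2.9, tower property: if `hhat` is a `G`-conditional
expectation of the L-bounded normal integrand `h` and `hbar` is a `G'`-conditional
expectation of `hhat` for `G' ⊆ G`, then `hbar` is a `G'`-conditional expectation of `h`. -/
theorem statement5 {Ω : Type*} {mΩ : MeasurableSpace Ω} (μ : Measure Ω)
    [IsProbabilityMeasure μ] (hcompl : μ.IsComplete)
    (G G' : MeasurableSpace Ω) (hG'G : G' ≤ G) (hG : G ≤ mΩ) (n : ℕ)
    (h : EuclideanSpace ℝ (Fin n) → Ω → EReal)
    (hNI : IsNormalIntegrand mΩ h) (hLB : LBounded μ h)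
    (hhat hbar : EuclideanSpace ℝ (Fin n) → Ω → EReal)
    (hce : IsCondNI μ G h hhat) (hce' : IsCondNI μ G' hhat hbar) :
    IsCondNI μ G' h hbar :=
  statement5_general (mΩ := mΩ) μ G G' hG'G n h hhat hbar hce hce'

end PaperDP
end
end

section
/- N^⊥ = { v ∈ L¹(Ω,F,P;ℝⁿ) : E[v_t | F_t] = 0 a.s. for every t = 0,…,T }, where v = (v₀,…,v_T) with v_t taking values in ℝ^{n_t}. -/
open MeasureTheory ENNReal
open scoped RealInnerProductSpace

noncomputable section

namespace PaperDP

variable {Ω : Type*}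

/-! ### Multistage setting -/

/-- The space `ℝⁿ = ℝ^{n₀} × ⋯ × ℝ^{n_T}` of deterministic strategies. -/
abbrev Strat (T : ℕ) (nn : ℕ → ℕ) := (t : Fin (T + 1)) → EuclideanSpace ℝ (Fin (nn t.1))

/-- The scalar product `x · v = Σ_t x_t · v_t` on `Strat T nn`. -/
def sdot {T : ℕ} {nn : ℕ → ℕ} (x v : Strat T nn) : ℝ :=
  ∑ t : Fin (T + 1), ⟪x t, v t⟫

/-- An adapted process: `x_t` is `F_t`-measurable for every `t`. -/
def AdaptedProc (T : ℕ) (nn : ℕ → ℕ)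
    (𝓕 : ℕ → MeasurableSpace Ω) (x : Ω → Strat T nn) : Prop :=
  ∀ t : Fin (T + 1), Measurable[𝓕 t.1] fun ω => x ω t

/-- `v ∈ N^⊥`: `v` is integrable and `E[x·v] = 0` for every bounded adapted `x`. -/
def InNperp {mΩ : MeasurableSpace Ω} (μ : Measure Ω) (T : ℕ) (nn : ℕ → ℕ)
    (𝓕 : ℕ → MeasurableSpace Ω) (v : Ω → Strat T nn) : Prop :=
  Integrable v μ ∧
  ∀ x : Ω → Strat T nn, AdaptedProc T nn 𝓕 x → (∃ C, ∀ ω, ‖x ω‖ ≤ C) →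
    ∫ ω, sdot (x ω) (v ω) ∂μ = 0

/-- `(H t)_{t ≤ T}` solves the Bellman equations (BE) for `h`:  each `H t` depends only on
the coordinates `x₀,…,x_t`; `H T` is an `F_T`-conditional expectation of `h`; and there
are normal integrands `Ht t` with `Ht t = inf over `x_{t+1}` of `H (t+1)` and `H t` an
`F_t`-conditional expectation of `Ht t`. -/
def IsBellman {mΩ : MeasurableSpace Ω} (μ : Measure Ω) (T : ℕ) (nn : ℕ → ℕ)
    (𝓕 : ℕ → MeasurableSpace Ω) (h : Strat T nn → Ω → EReal)
    (H : ℕ → Strat T nn → Ω → EReal) : Prop :=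
  (∀ t : ℕ, t ≤ T → ∀ x y : Strat T nn, ∀ ω : Ω,
      (∀ s : Fin (T + 1), s.1 ≤ t → x s = y s) → H t x ω = H t y ω) ∧
  IsCondNI μ (𝓕 T) h (H T) ∧
  ∃ Ht : ℕ → Strat T nn → Ω → EReal, ∀ t : ℕ, (ht : t < T) →
    IsNormalIntegrand mΩ (Ht t) ∧
    (∀ (x : Strat T nn) (ω : Ω),
      Ht t x ω = ⨅ ξ : EuclideanSpace ℝ (Fin (nn (t + 1))),
        H (t + 1) (Function.update x ⟨t + 1, by omega⟩ ξ) ω) ∧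
    IsCondNI μ (𝓕 t) (Ht t) (H t)

/-- The set `N_t(ω)` associated with a Bellman solution. -/
def Nset {T : ℕ} {nn : ℕ → ℕ} (H : ℕ → Strat T nn → Ω → EReal) (t : Fin (T + 1))
    (ω : Ω) : Set (EuclideanSpace ℝ (Fin (nn t.1))) :=
  {ξ | recessionFn (fun z => H t.1 z ω) (Function.update 0 t ξ) ≤ 0}

/-- The optimum value of the stochastic optimization problem (SP). -/
def SPval {mΩ : MeasurableSpace Ω} (μ : Measure Ω) (T : ℕ) (nn : ℕ → ℕ)
    (𝓕 : ℕ → MeasurableSpace Ω) (h : Strat T nn → Ω → EReal) : EReal :=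
  ⨅ x : {x : Ω → Strat T nn // AdaptedProc T nn 𝓕 x}, EInt μ (fun ω => h (x.1 ω) ω)

/-- `xbar` solves (SP): it is adapted and minimizes the objective over adapted processes. -/
def Solves {mΩ : MeasurableSpace Ω} (μ : Measure Ω) (T : ℕ) (nn : ℕ → ℕ)
    (𝓕 : ℕ → MeasurableSpace Ω) (h : Strat T nn → Ω → EReal) (xbar : Ω → Strat T nn) : Prop :=
  AdaptedProc T nn 𝓕 xbar ∧
  ∀ x : Ω → Strat T nn, AdaptedProc T nn 𝓕 x →
    EInt μ (fun ω => h (xbar ω) ω) ≤ EInt μ (fun ω => h (x ω) ω)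


/-! Pulling the bounded `F_t`-measurable factor `x_t` out of `E[x_t · v_t | F_t]` shows that
`E[v_t | F_t] = 0` kills every `E[x_t · v_t]`; conversely, testing against
`x = 1_A · ∫_A v_t` placed in coordinate `t` gives `‖∫_A v_t‖² = 0` for every `A ∈ F_t`. -/

section CondExpInner

variable {Ω E : Type*} {m mΩ : MeasurableSpace Ω} {μ : Measure Ω}
  [NormedAddCommGroup E] [InnerProductSpace ℝ E]

theorem integrable_inner_of_norm_le {x v : Ω → E} {C : ℝ} (hx : AEStronglyMeasurable x μ)
    (hC : ∀ ω, ‖x ω‖ ≤ C) (hv : Integrable v μ) : Integrable (fun ω => ⟪x ω, v ω⟫) μ :=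
  (innerSL ℝ).integrable_of_bilin_of_bdd_left C hx (ae_of_all _ hC) hv

variable [CompleteSpace E]

theorem integral_inner_eq_zero_of_condExp_ae_eq_zero (hm : m ≤ mΩ) [SigmaFinite (μ.trim hm)]
    {x v : Ω → E} {C : ℝ} (hx : StronglyMeasurable[m] x) (hC : ∀ ω, ‖x ω‖ ≤ C) (hv : Integrable v μ)
    (h0 : μ[v|m] =ᵐ[μ] 0) : ∫ ω, ⟪x ω, v ω⟫ ∂μ = 0 := by
  have hxv := integrable_inner_of_norm_le (hx.mono hm).aestronglyMeasurable hC hv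
  have pull_out : μ[fun ω => ⟪x ω, v ω⟫|m] =ᵐ[μ] fun ω => ⟪x ω, μ[v|m] ω⟫ :=
    condExp_bilin_of_stronglyMeasurable_left (innerSL ℝ) hx hxv hv
  calc ∫ ω, ⟪x ω, v ω⟫ ∂μ = ∫ ω, μ[fun ω => ⟪x ω, v ω⟫|m] ω ∂μ := (integral_condExp hm).symm
    _ = ∫ ω, ⟪x ω, μ[v|m] ω⟫ ∂μ := integral_congr_ae pull_out
    _ = 0 := integral_eq_zero_of_ae <| by filter_upwards [h0] with ω hω using by simp [hω]

theorem condExp_ae_eq_zero_of_forall_integral_inner_eq_zero (hm : m ≤ mΩ)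
    [SigmaFinite (μ.trim hm)] {v : Ω → E} (hv : Integrable v μ)
    (h : ∀ x : Ω → E, StronglyMeasurable[m] x → (∃ C, ∀ ω, ‖x ω‖ ≤ C) →
      ∫ ω, ⟪x ω, v ω⟫ ∂μ = 0) :
    μ[v|m] =ᵐ[μ] 0 := by
  have hset : ∀ s, MeasurableSet[m] s → ∫ ω in s, v ω ∂μ = 0 := by
    intro s hs
    set c := ∫ ω in s, v ω ∂μ
    have hx : StronglyMeasurable[m] (s.indicator fun _ => c) :=
      stronglyMeasurable_const.indicator hs
    have hbound : ∀ ω, ‖s.indicator (fun _ => c) ω‖ ≤ ‖c‖ :=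
      fun ω => norm_indicator_le_norm_self _ ω
    have hsq : ⟪c, c⟫ = 0 := calc
      ⟪c, c⟫ = ∫ ω in s, ⟪c, v ω⟫ ∂μ := (integral_inner hv.integrableOn c).symm
      _ = ∫ ω, ⟪s.indicator (fun _ => c) ω, v ω⟫ ∂μ := by
        rw [← integral_indicator (hm s hs)]
        congr 1 with ω
        by_cases hω : ω ∈ s <;> simp [hω]
      _ = 0 := h _ hx ⟨_, hbound⟩
    exact inner_self_eq_zero.mp hsq
  exact (ae_eq_condExp_of_forall_setIntegral_eq hm hv (fun _ _ _ => integrableOn_zero)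
    (fun s hs _ => by simp [hset s hs]) stronglyMeasurable_const.aestronglyMeasurable).symm

end CondExpInner

section Single

variable {Ω : Type*} {T : ℕ} {nn : ℕ → ℕ}

theorem sdot_single_left (t : Fin (T + 1)) (y : EuclideanSpace ℝ (Fin (nn t.1)))
    (v : Strat T nn) : sdot (Pi.single t y) v = ⟪y, v t⟫ := by
  rw [sdot, Finset.sum_eq_single t (fun s _ hs => by simp [Pi.single_eq_of_ne hs]) (by simp)]
  simp

theorem adaptedProc_single {𝓕 : ℕ → MeasurableSpace Ω} (t : Fin (T + 1))
    {y : Ω → EuclideanSpace ℝ (Fin (nn t.1))} (hy : Measurable[𝓕 t.1] y) :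
    AdaptedProc T nn 𝓕 fun ω => Pi.single t (y ω) := by
  intro s
  by_cases hs : s = t
  · subst hs
    simp only [Pi.single_eq_same]
    exact hy
  · simp only [Pi.single_eq_of_ne hs]
    exact measurable_const

end Single

theorem statement10_general {Ω : Type*} {mΩ : MeasurableSpace Ω} (μ : Measure Ω)
    [IsProbabilityMeasure μ] (T : ℕ) (nn : ℕ → ℕ) (𝓕 : ℕ → MeasurableSpace Ω)
    (hle : ∀ t, 𝓕 t ≤ mΩ) :
    {v : Ω → Strat T nn | InNperp μ T nn 𝓕 v} =
      {v : Ω → Strat T nn | Integrable v μ ∧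
        ∀ t : Fin (T + 1), μ[fun ω => v ω t|𝓕 t.1] =ᵐ[μ] 0} := by
  ext v
  simp only [Set.mem_ofPred_eq, InNperp]
  refine and_congr_right fun hv => ?_
  have hvt : ∀ t, Integrable (fun ω => v ω t) μ := hv.eval
  constructor
  · intro hperp t
    refine condExp_ae_eq_zero_of_forall_integral_inner_eq_zero (hle t) (hvt t)
      fun y hy ⟨C, hC⟩ => ?_
    simpa only [sdot_single_left] using hperp _ (adaptedProc_single t hy.measurable)
      ⟨C, fun ω => by rw [Pi.norm_single]; exact hC ω⟩
  · rintro h0 x hx ⟨C, hC⟩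
    have hxt : ∀ t ω, ‖x ω t‖ ≤ C := fun t ω => (norm_le_pi_norm (x ω) t).trans (hC ω)
    have hterm : ∀ t, Integrable (fun ω => ⟪x ω t, v ω t⟫) μ := fun t =>
      integrable_inner_of_norm_le ((hx t).mono (hle t) le_rfl).aestronglyMeasurable
        (hxt t) (hvt t)
    simp only [sdot]
    rw [integral_finsetSum _ fun t _ => hterm t]
    exact Finset.sum_eq_zero fun t _ => integral_inner_eq_zero_of_condExp_ae_eq_zero (hle t)
      (hx t).stronglyMeasurable (hxt t) (hvt t) (h0 t)

/-- Lemma 4.1: `N^⊥` consists exactly of the integrable `v` with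
`E[v_t | F_t] = 0` a.s. for every `t`. -/
theorem statement10 {Ω : Type*} {mΩ : MeasurableSpace Ω} (μ : Measure Ω)
    [IsProbabilityMeasure μ] (T : ℕ) (nn : ℕ → ℕ) (𝓕 : ℕ → MeasurableSpace Ω)
    (hle : ∀ t, 𝓕 t ≤ mΩ) (hmono : ∀ s t, s ≤ t → 𝓕 s ≤ 𝓕 t) :
    {v : Ω → Strat T nn | InNperp μ T nn 𝓕 v} =
      {v : Ω → Strat T nn | Integrable v μ ∧
        ∀ t : Fin (T + 1), μ[fun ω => v ω t|𝓕 t.1] =ᵐ[μ] 0} :=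
  statement10_general μ T nn 𝓕 hle

end PaperDP
end
end

section
/- Let x ∈ N and v ∈ N^⊥. If the positive part of x·v := Σ_{t=0}^T x_t·v_t is integrable, then x·v is integrable and E[x·v] = 0. -/
/-!
Write `x·v = ∑ⱼ Xⱼ Vⱼ` over the coordinates `j = (t, i)`, so that `Xⱼ` is `F_{τ j}`-measurable
and `E[Vⱼ | F_{τ j}] = 0`, and induct on the horizon `n`. Conditioning on `F_n` turns
`S = ∑ⱼ Xⱼ Vⱼ` into `S' = ∑ⱼ Xⱼ E[Vⱼ | F_n]`, in which the terms of time `n` vanish, and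
`∫_B S' = ∫_B S` for every `F_n`-measurable `B` on which all `Xⱼ` are bounded. The sets
`A_k = {maxⱼ |Xⱼ| ≤ k}` are such, and taking `B = A_k ∩ {S' > 0}` bounds `E[S'⁺]` by `E[S⁺]`,
so the induction hypothesis applies to `S'`. Then `∫_{A_k} |S| ≤ 2 E[S⁺] + E|S'|`, and letting
`k → ∞` gives that `S` is integrable with `E S = E S' = 0`.
-/

open MeasureTheory ENNReal
open scoped RealInnerProductSpace

noncomputable section

open Filter Topology Set

namespace MeasureTheory

variable {Ω : Type*} {m mΩ : MeasurableSpace Ω} {μ : Measure Ω}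

theorem integrable_of_monotone_of_setIntegral_norm_le {E : Type*} [NormedAddCommGroup E]
    {f : Ω → E} {A : ℕ → Set Ω} {M : ℝ} (hmono : Monotone A) (hcover : ⋃ k, A k = univ)
    (hf : AEStronglyMeasurable f μ) (hfA : ∀ k, IntegrableOn f (A k) μ)
    (hM : ∀ k, ∫ ω in A k, ‖f ω‖ ∂μ ≤ M) : Integrable f μ := by
  refine ⟨hf, ?_⟩
  have hsup : ∫⁻ ω, ‖f ω‖ₑ ∂μ = ⨆ k, ∫⁻ ω in A k, ‖f ω‖ₑ ∂μ := by
    rw [← setLIntegral_iUnion_of_directed _ hmono.directed_le, hcover, Measure.restrict_univ]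
  rw [HasFiniteIntegral, hsup]
  refine lt_of_le_of_lt (iSup_le fun k => ?_) (ENNReal.ofReal_lt_top (r := M))
  rw [← ofReal_integral_norm_eq_lintegral_enorm (hfA k)]
  exact ENNReal.ofReal_le_ofReal (hM k)

theorem setIntegral_mul_condExp_of_bound (hm : m ≤ mΩ) [IsFiniteMeasure μ] {B : Set Ω}
    (hB : MeasurableSet[m] B) {X V : Ω → ℝ} (hX : StronglyMeasurable[m] X)
    (hV : Integrable V μ) {c : ℝ} (hXc : ∀ ω ∈ B, |X ω| ≤ c) :
    ∫ ω in B, X ω * μ[V|m] ω ∂μ = ∫ ω in B, X ω * V ω ∂μ := by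
  have hbound : ∀ᵐ ω ∂μ, ‖B.indicator X ω‖ ≤ max c 0 := .of_forall fun ω => by
    by_cases hω : ω ∈ B
    · rw [indicator_of_mem hω, Real.norm_eq_abs]; exact le_max_of_le_left (hXc ω hω)
    · rw [indicator_of_notMem hω, norm_zero]; exact le_max_right _ _
  rw [← integral_indicator (hm B hB), ← integral_indicator (hm B hB)]
  simp_rw [Set.indicator_mul_left]
  rw [← integral_condExp hm (f := fun ω => B.indicator X ω * V ω)]
  exact integral_congr_ae
    (condExp_stronglyMeasurable_mul_of_bound hm (hX.indicator hB) hV _ hbound).symm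

theorem integrableOn_mul_of_abs_le {B : Set Ω} (hB : MeasurableSet B) {X V : Ω → ℝ}
    (hX : AEStronglyMeasurable X μ) (hV : Integrable V μ) {c : ℝ} (hXc : ∀ ω ∈ B, |X ω| ≤ c) :
    IntegrableOn (fun ω => X ω * V ω) B μ :=
  hV.integrableOn.bdd_mul hX.restrict (ae_restrict_of_forall_mem hB hXc)

section ConditioningStep

variable {ι : Type*}

def boundSet (X : ι → Ω → ℝ) (k : ℕ) : Set Ω := {ω | ∀ j, |X j ω| ≤ k}

theorem measurableSet_boundSet [Countable ι] {X : ι → Ω → ℝ}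
    (hX : ∀ j, StronglyMeasurable[m] (X j)) (k : ℕ) : MeasurableSet[m] (boundSet X k) := by
  simp only [boundSet, ofPred_forall]
  exact MeasurableSet.iInter fun j => measurableSet_le (hX j).measurable.abs measurable_const

theorem monotone_boundSet (X : ι → Ω → ℝ) : Monotone (boundSet X) :=
  fun _ _ hkl _ hω j => (hω j).trans (Nat.cast_le.2 hkl)

theorem iUnion_boundSet [Fintype ι] (X : ι → Ω → ℝ) : ⋃ k, boundSet X k = univ := by
  refine eq_univ_of_forall fun ω => mem_iUnion.2 ?_
  obtain ⟨k, hk⟩ := exists_nat_ge (∑ j, |X j ω|)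
  exact ⟨k, fun j => (Finset.single_le_sum (fun j _ => abs_nonneg (X j ω))
    (Finset.mem_univ j)).trans hk⟩

theorem integrableOn_sum_mul_of_abs_le [Fintype ι] {B : Set Ω} (hB : MeasurableSet B)
    {X V : ι → Ω → ℝ} (hX : ∀ j, AEStronglyMeasurable (X j) μ) (hV : ∀ j, Integrable (V j) μ)
    {c : ℝ} (hXc : ∀ ω ∈ B, ∀ j, |X j ω| ≤ c) :
    IntegrableOn (fun ω => ∑ j, X j ω * V j ω) B μ :=
  integrable_finsetSum _ fun j _ =>
    integrableOn_mul_of_abs_le hB (hX j) (hV j) fun ω hω => hXc ω hω j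

variable [Fintype ι] [IsFiniteMeasure μ] {X V : ι → Ω → ℝ}

theorem setIntegral_sum_mul_condExp (hm : m ≤ mΩ)
    (hX : ∀ j, StronglyMeasurable[m] (X j)) (hV : ∀ j, Integrable (V j) μ) {B : Set Ω}
    (hB : MeasurableSet[m] B) {c : ℝ} (hXc : ∀ ω ∈ B, ∀ j, |X j ω| ≤ c) :
    ∫ ω in B, ∑ j, X j ω * μ[V j|m] ω ∂μ = ∫ ω in B, ∑ j, X j ω * V j ω ∂μ := by
  have hXμ j : AEStronglyMeasurable (X j) μ := ((hX j).mono hm).aestronglyMeasurable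
  rw [integral_finsetSum _ fun j _ => integrableOn_mul_of_abs_le (hm B hB) (hXμ j)
      integrable_condExp fun ω hω => hXc ω hω j,
    integral_finsetSum _ fun j _ => integrableOn_mul_of_abs_le (hm B hB) (hXμ j) (hV j)
      fun ω hω => hXc ω hω j]
  exact Finset.sum_congr rfl fun j _ =>
    setIntegral_mul_condExp_of_bound hm hB (hX j) (hV j) fun ω hω => hXc ω hω j

theorem integrable_posPart_sum_mul_condExp (hm : m ≤ mΩ)
    (hX : ∀ j, StronglyMeasurable[m] (X j)) (hV : ∀ j, Integrable (V j) μ)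
    (hpos : Integrable (fun ω => max (∑ j, X j ω * V j ω) 0) μ) :
    Integrable (fun ω => max (∑ j, X j ω * μ[V j|m] ω) 0) μ := by
  set S := fun ω => ∑ j, X j ω * V j ω
  set S' := fun ω => ∑ j, X j ω * μ[V j|m] ω
  have hS' : StronglyMeasurable[m] S' :=
    Finset.stronglyMeasurable_fun_sum _ fun j _ => (hX j).mul stronglyMeasurable_condExp
  have hP : MeasurableSet[m] {ω | 0 < S' ω} := measurableSet_lt measurable_const hS'.measurable
  have hA := measurableSet_boundSet hX
  refine integrable_of_monotone_of_setIntegral_norm_le (M := ∫ ω, max (S ω) 0 ∂μ)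
    (monotone_boundSet X) (iUnion_boundSet X)
    ((hS'.mono hm).measurable.max measurable_const).aestronglyMeasurable
    (fun k => (integrableOn_sum_mul_of_abs_le (hm _ (hA k))
      (fun j => ((hX j).mono hm).aestronglyMeasurable) (fun _ => integrable_condExp)
      fun _ hω => hω).pos_part) fun k => ?_
  calc ∫ ω in boundSet X k, ‖max (S' ω) 0‖ ∂μ
      = ∫ ω in boundSet X k ∩ {ω | 0 < S' ω}, S' ω ∂μ := by
        rw [← setIntegral_indicator (hm _ hP)]
        congr 1 with ω
        rw [Real.norm_of_nonneg (le_max_right _ _)]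
        by_cases h : 0 < S' ω
        · simp [h, max_eq_left h.le]
        · simp [h, max_eq_right (not_lt.1 h)]
    _ = ∫ ω in boundSet X k ∩ {ω | 0 < S' ω}, S ω ∂μ :=
        setIntegral_sum_mul_condExp hm hX hV ((hA k).inter hP) fun _ hω => hω.1
    _ ≤ ∫ ω in boundSet X k ∩ {ω | 0 < S' ω}, max (S ω) 0 ∂μ :=
        setIntegral_mono_on (integrableOn_sum_mul_of_abs_le (hm _ ((hA k).inter hP))
          (fun j => ((hX j).mono hm).aestronglyMeasurable) hV fun _ hω => hω.1)
          hpos.integrableOn (hm _ ((hA k).inter hP)) fun _ _ => le_max_left _ _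
    _ ≤ ∫ ω, max (S ω) 0 ∂μ :=
        setIntegral_le_integral hpos (.of_forall fun _ => le_max_right _ _)

theorem integrable_sum_mul_and_integral_eq_of_condExp (hm : m ≤ mΩ)
    (hX : ∀ j, StronglyMeasurable[m] (X j)) (hV : ∀ j, Integrable (V j) μ)
    (hpos : Integrable (fun ω => max (∑ j, X j ω * V j ω) 0) μ)
    (hS' : Integrable (fun ω => ∑ j, X j ω * μ[V j|m] ω) μ) :
    Integrable (fun ω => ∑ j, X j ω * V j ω) μ ∧
      ∫ ω, ∑ j, X j ω * V j ω ∂μ = ∫ ω, ∑ j, X j ω * μ[V j|m] ω ∂μ := by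
  set S := fun ω => ∑ j, X j ω * V j ω
  set S' := fun ω => ∑ j, X j ω * μ[V j|m] ω
  have hA k : MeasurableSet (boundSet X k) := hm _ (measurableSet_boundSet hX k)
  have hSA k : IntegrableOn S (boundSet X k) μ := integrableOn_sum_mul_of_abs_le (hA k)
    (fun j => ((hX j).mono hm).aestronglyMeasurable) hV fun _ hω => hω
  have heq k : ∫ ω in boundSet X k, S' ω ∂μ = ∫ ω in boundSet X k, S ω ∂μ :=
    setIntegral_sum_mul_condExp hm hX hV (measurableSet_boundSet hX k) fun _ hω => hω
  have hS : Integrable S μ := by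
    refine integrable_of_monotone_of_setIntegral_norm_le
      (M := 2 * ∫ ω, max (S ω) 0 ∂μ + ∫ ω, |S' ω| ∂μ) (monotone_boundSet X) (iUnion_boundSet X)
      (Finset.aestronglyMeasurable_fun_sum _ fun j _ =>
        ((hX j).mono hm).aestronglyMeasurable.mul (hV j).aestronglyMeasurable) hSA fun k => ?_
    have habs ω : ‖S ω‖ = 2 * max (S ω) 0 - S ω := by
      rw [Real.norm_eq_abs]
      rcases le_total (S ω) 0 with h | h
      · rw [abs_of_nonpos h, max_eq_right h]; ring
      · rw [abs_of_nonneg h, max_eq_left h]; ring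
    simp_rw [habs]
    rw [integral_sub ((hSA k).pos_part.const_mul 2) (hSA k), integral_const_mul, ← heq k]
    have hSpos : ∫ ω in boundSet X k, max (S ω) 0 ∂μ ≤ ∫ ω, max (S ω) 0 ∂μ :=
      setIntegral_le_integral hpos (.of_forall fun _ => le_max_right _ _)
    have hS'neg : -∫ ω in boundSet X k, S' ω ∂μ ≤ ∫ ω, |S' ω| ∂μ :=
      (neg_le_abs _).trans (abs_integral_le_integral_abs.trans
        (setIntegral_le_integral hS'.abs (.of_forall fun _ => abs_nonneg _)))
    linarith
  have hlim {f : Ω → ℝ} (hf : Integrable f μ) :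
      Tendsto (fun k => ∫ ω in boundSet X k, f ω ∂μ) atTop (𝓝 (∫ ω, f ω ∂μ)) := by
    simpa [iUnion_boundSet, Measure.restrict_univ] using
      tendsto_setIntegral_of_monotone hA (monotone_boundSet X) hf.integrableOn
  exact ⟨hS, tendsto_nhds_unique (hlim hS) (by simpa only [heq] using hlim hS')⟩

end ConditioningStep

theorem integrable_sum_mul_and_integral_eq_zero {ι : Type*} [Fintype ι] [IsFiniteMeasure μ]
    (𝓕 : Filtration ℕ mΩ) (n : ℕ) (τ : ι → ℕ) (hτ : ∀ j, τ j < n) {X V : ι → Ω → ℝ}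
    (hX : ∀ j, StronglyMeasurable[𝓕 (τ j)] (X j)) (hV : ∀ j, Integrable (V j) μ)
    (hV0 : ∀ j, μ[V j|𝓕 (τ j)] =ᵐ[μ] 0)
    (hpos : Integrable (fun ω => max (∑ j, X j ω * V j ω) 0) μ) :
    Integrable (fun ω => ∑ j, X j ω * V j ω) μ ∧ ∫ ω, ∑ j, X j ω * V j ω ∂μ = 0 := by
  induction n generalizing ι with
  | zero =>
    have : IsEmpty ι := ⟨fun j => Nat.not_lt_zero _ (hτ j)⟩
    simp
  | succ n ih =>
    have hXn j : StronglyMeasurable[𝓕 n] (X j) :=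
      (hX j).mono (𝓕.mono (Nat.lt_succ_iff.1 (hτ j)))
    -- the terms of time `n` vanish since `E[Vⱼ | F_{τ j}] = 0`
    have hS' : (fun ω => ∑ j, X j ω * μ[V j|𝓕 n] ω) =ᵐ[μ]
        fun ω => ∑ j : {j // τ j < n}, X j ω * μ[V j|𝓕 n] ω := by
      have h0 : ∀ᵐ ω ∂μ, ∀ j : {j // ¬ τ j < n}, μ[V j|𝓕 n] ω = 0 := ae_all_iff.2 fun j => by
        have hj : τ j = n := by have := hτ j; have := j.2; omega
        have h := hV0 j
        rwa [hj] at h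
      filter_upwards [h0] with ω hω
      rw [← Fintype.sum_subtype_add_sum_subtype (fun j => τ j < n)]
      simp [hω]
    obtain ⟨hint, hzero⟩ := ih (fun j : {j // τ j < n} => τ j) (fun j => j.2) (X := fun j => X j)
      (V := fun j => μ[V j|𝓕 n]) (fun j => hX j) (fun _ => integrable_condExp)
      (fun j => (condExp_condExp_of_le (𝓕.mono j.2.le) (𝓕.le n)).trans (hV0 j))
      ((integrable_posPart_sum_mul_condExp (𝓕.le n) hXn hV hpos).congr
        (hS'.mono fun ω h => by simp only [h]))
    obtain ⟨hS, heq⟩ :=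
      integrable_sum_mul_and_integral_eq_of_condExp (𝓕.le n) hXn hV hpos (hint.congr hS'.symm)
    exact ⟨hS, heq.trans ((integral_congr_ae hS').trans hzero)⟩

end MeasureTheory

namespace PaperDP

variable {Ω : Type*} {mΩ : MeasurableSpace Ω} {μ : Measure Ω} {T : ℕ} {nn : ℕ → ℕ}
  {𝓕 : ℕ → MeasurableSpace Ω}

theorem sdot_eq_sum_sigma (x v : Strat T nn) :
    sdot x v = ∑ j : (t : Fin (T + 1)) × Fin (nn t), x j.1 j.2 * v j.1 j.2 := by
  simp [sdot, Fintype.sum_sigma, PiLp.inner_apply, mul_comm]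

theorem AdaptedProc.stronglyMeasurable_coord {x : Ω → Strat T nn} (hx : AdaptedProc T nn 𝓕 x)
    (t : Fin (T + 1)) (i : Fin (nn t)) : StronglyMeasurable[𝓕 t] fun ω => x ω t i :=
  ((EuclideanSpace.proj i).continuous.measurable.comp (hx t)).stronglyMeasurable

theorem InNperp.integrable_coord {v : Ω → Strat T nn} (hv : InNperp μ T nn 𝓕 v)
    (t : Fin (T + 1)) (i : Fin (nn t)) : Integrable (fun ω => v ω t i) μ :=
  (EuclideanSpace.proj (𝕜 := ℝ) i).integrable_comp ((ContinuousLinearMap.proj (R := ℝ)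
    (φ := fun s : Fin (T + 1) => EuclideanSpace ℝ (Fin (nn s))) t).integrable_comp hv.1)

theorem InNperp.condExp_coord_eq_zero [IsFiniteMeasure μ] (hle : ∀ t, 𝓕 t ≤ mΩ)
    {v : Ω → Strat T nn} (hv : InNperp μ T nn 𝓕 v) (t : Fin (T + 1)) (i : Fin (nn t)) :
    μ[fun ω => v ω t i | 𝓕 t] =ᵐ[μ] 0 := by
  refine (ae_eq_condExp_of_forall_setIntegral_eq (hle t) (hv.integrable_coord t i)
    (fun _ _ _ => integrableOn_zero) (fun s hs _ => ?_) aestronglyMeasurable_zero).symm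
  set z : Ω → Strat T nn :=
    fun ω => Pi.single t (s.indicator (fun _ => (1 : ℝ)) ω • EuclideanSpace.single i 1)
  have hz : AdaptedProc T nn 𝓕 z := by
    intro r
    by_cases h : r = t
    · subst h
      have h1 : Measurable[𝓕 r] (s.indicator fun _ => (1 : ℝ)) := measurable_const.indicator hs
      simpa [z] using h1.smul_const (EuclideanSpace.single i (1 : ℝ))
    · simp [z, Pi.single_eq_of_ne h]
  have hzb : ∃ C, ∀ ω, ‖z ω‖ ≤ C := ⟨1, fun ω => by
    by_cases h : ω ∈ s <;> simp [z, Pi.norm_single, h]⟩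
  have hzv ω : sdot (z ω) (v ω) = s.indicator (fun ω => v ω t i) ω := by
    rw [sdot, Fintype.sum_eq_single t fun r hr => by simp [z, Pi.single_eq_of_ne hr]]
    by_cases h : ω ∈ s <;> simp [z, EuclideanSpace.inner_single_left, h]
  simpa [hzv, integral_indicator (hle t s hs)] using (hv.2 z hz hzb).symm

/-- Lemma 4.2: if `x ∈ N`, `v ∈ N^⊥` and the positive part of `x·v`
is integrable, then `x·v` is integrable and `E[x·v] = 0`. -/
theorem statement11 {Ω : Type*} {mΩ : MeasurableSpace Ω} (μ : Measure Ω)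
    [IsProbabilityMeasure μ] (T : ℕ) (nn : ℕ → ℕ) (𝓕 : ℕ → MeasurableSpace Ω)
    (hle : ∀ t, 𝓕 t ≤ mΩ) (hmono : ∀ s t, s ≤ t → 𝓕 s ≤ 𝓕 t)
    (x : Ω → Strat T nn) (hx : AdaptedProc T nn 𝓕 x)
    (v : Ω → Strat T nn) (hv : InNperp μ T nn 𝓕 v)
    (hpos : Integrable (fun ω => max (sdot (x ω) (v ω)) 0) μ) :
    Integrable (fun ω => sdot (x ω) (v ω)) μ ∧
    ∫ ω, sdot (x ω) (v ω) ∂μ = 0 := by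
  let 𝓖 : Filtration ℕ mΩ := ⟨𝓕, fun _ _ => hmono _ _, hle⟩
  simp only [sdot_eq_sum_sigma] at hpos ⊢
  exact integrable_sum_mul_and_integral_eq_zero 𝓖 (T + 1) (fun j => j.1) (fun j => j.1.2)
    (fun j => hx.stronglyMeasurable_coord j.1 j.2) (fun j => hv.integrable_coord j.1 j.2)
    (fun j => hv.condExp_coord_eq_zero hle j.1 j.2) hpos

end PaperDP
end
end

section
/- Let s = (s_t)_{t=0}^T be an ℝᵈ-valued martingale with respect to the filtration (F_t)_{t=0}^T (each s_t is F_t-measurable and integrable, and E[s_{t+1} − s_t | F_t] = 0 a.s.), and let (x_t)_{t=0}^{T−1} be an adapted process with x_t : Ω → ℝᵈ F_t-measurable. If the positive part of Σ_{t=0}^{T−1} x_t·(s_{t+1} − s_t) is integrable, then Σ_{t=0}^{T−1} x_t·(s_{t+1} − s_t) is integrable and E[Σ_{t=0}^{T−1} x_t·(s_{t+1} − s_t)] = 0. -/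
/-!
Each increment `ξ_t = ⟪x_t, s_{t+1} - s_t⟫` has vanishing generalized conditional expectation
given `𝓕 t`: on the `𝓕 t`-sets `{‖x_t‖ ≤ n}` the pull-out property gives
`E[1_{‖x_t‖ ≤ n} ξ_t | 𝓕 t] = ⟪1_{‖x_t‖ ≤ n} x_t, E[s_{t+1} - s_t | 𝓕 t]⟫ = 0`.
For such an increment `ξ` and an `𝓕 t`-measurable `Z`, integrating `Z + ξ` over the sets
`{0 ≤ Z ≤ n, ‖x_t‖ ≤ n}` shows that `(Z + ξ)⁺` integrable forces `Z⁺` integrable; backward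
induction thus gives integrable positive parts for all partial sums `S_k`. Forward induction then
shows `S_k` integrable with mean zero: `ξ⁺ ≤ S_{k+1}⁺ + |S_k|` is integrable, the truncated
integrals of `ξ⁻` equal those of `ξ⁺`, so `ξ` is integrable by monotone convergence, and its mean
is the limit of its truncated means, all zero.
-/

open MeasureTheory Set
open scoped RealInnerProductSpace

/-- `ξ` has generalized conditional expectation zero given `m`, in the sense of Jacod–Shiryaev. -/
def GenCondExpZero {Ω : Type*} (m : MeasurableSpace Ω) {mΩ : MeasurableSpace Ω} (μ : Measure Ω)
    (ξ : Ω → ℝ) : Prop :=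
  ∃ A : ℕ → Set Ω, Monotone A ∧ (∀ n, MeasurableSet[m] (A n)) ∧ ⋃ n, A n = univ ∧
    ∀ n, Integrable ((A n).indicator ξ) μ ∧ μ[(A n).indicator ξ | m] =ᵐ[μ] 0

section

variable {Ω : Type*} {m mΩ : MeasurableSpace Ω} {μ : Measure Ω}

theorem integrable_of_setIntegral_le_of_monotone {f : Ω → ℝ} (hf : AEStronglyMeasurable f μ)
    (hf0 : 0 ≤ f) {A : ℕ → Set Ω} (hA : Monotone A) (hAU : ⋃ n, A n = univ)
    (hfA : ∀ n, IntegrableOn f (A n) μ) {C : ℝ} (hC : ∀ n, ∫ ω in A n, f ω ∂μ ≤ C) :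
    Integrable f μ := by
  refine ⟨hf, (hasFiniteIntegral_iff_ofReal (ae_of_all _ hf0)).2 ?_⟩
  calc ∫⁻ ω, ENNReal.ofReal (f ω) ∂μ = ⨆ n, ∫⁻ ω in A n, ENNReal.ofReal (f ω) ∂μ := by
        rw [← setLIntegral_iUnion_of_directed _ hA.directed_le, hAU, Measure.restrict_univ]
    _ = ⨆ n, ENNReal.ofReal (∫ ω in A n, f ω ∂μ) := by
        refine iSup_congr fun n => ?_
        exact (ofReal_integral_eq_lintegral_ofReal (hfA n) (ae_of_all _ hf0)).symm
    _ ≤ ENNReal.ofReal C := iSup_le fun n => ENNReal.ofReal_le_ofReal (hC n)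
    _ < ⊤ := ENNReal.ofReal_lt_top

theorem setIntegral_eq_zero_of_condExp_indicator_ae_eq_zero (hm : m ≤ mΩ)
    [SigmaFinite (μ.trim hm)] {ξ : Ω → ℝ} {A E : Set Ω} (hξA : Integrable (A.indicator ξ) μ)
    (hcond : μ[A.indicator ξ | m] =ᵐ[μ] 0) (hE : MeasurableSet[m] E) (hEA : E ⊆ A) :
    ∫ ω in E, ξ ω ∂μ = 0 :=
  calc ∫ ω in E, ξ ω ∂μ = ∫ ω in E, A.indicator ξ ω ∂μ :=
        setIntegral_congr_fun (hm E hE) fun ω hω => (indicator_of_mem (hEA hω) ξ).symm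
    _ = ∫ ω in E, μ[A.indicator ξ | m] ω ∂μ := (setIntegral_condExp hm hξA hE).symm
    _ = 0 := by rw [integral_congr_ae (ae_restrict_of_ae hcond)]; simp

theorem genCondExpZero_inner {E : Type*} [NormedAddCommGroup E] [InnerProductSpace ℝ E]
    [CompleteSpace E] (hm : m ≤ mΩ) {x Δ : Ω → E} (hx : StronglyMeasurable[m] x)
    (hΔ : Integrable Δ μ) (hcond : μ[Δ | m] =ᵐ[μ] 0) :
    GenCondExpZero m μ fun ω => ⟪x ω, Δ ω⟫ := by
  have hAm : ∀ n : ℕ, MeasurableSet[m] {ω | ‖x ω‖ ≤ n} := fun n =>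
    measurableSet_le hx.norm.measurable measurable_const
  refine ⟨fun n => {ω | ‖x ω‖ ≤ n},
    fun a b hab ω (hω : ‖x ω‖ ≤ a) => hω.trans (by exact_mod_cast hab), hAm,
    eq_univ_of_forall fun ω => mem_iUnion.2 (exists_nat_ge ‖x ω‖), fun n => ?_⟩
  set b := {ω | ‖x ω‖ ≤ n}.indicator x
  have hb : StronglyMeasurable[m] b := hx.indicator (hAm n)
  have hind : {ω | ‖x ω‖ ≤ n}.indicator (fun ω => ⟪x ω, Δ ω⟫) =
      fun ω => innerSL ℝ (b ω) (Δ ω) := by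
    ext ω
    by_cases h : ‖x ω‖ ≤ n <;> simp [b, h]
  have hint : Integrable (fun ω => innerSL ℝ (b ω) (Δ ω)) μ := by
    refine (innerSL ℝ).integrable_of_bilin_of_bdd_left n (hb.mono hm).aestronglyMeasurable
      (ae_of_all _ fun ω => ?_) hΔ
    by_cases h : ‖x ω‖ ≤ n <;> simp [b, h]
  rw [hind]
  refine ⟨hint, (condExp_bilin_of_stronglyMeasurable_left (innerSL ℝ) hb hint hΔ).trans ?_⟩
  filter_upwards [hcond] with ω hω
  simp [hω]

namespace GenCondExpZero

theorem integrable_and_integral_eq_zero (hm : m ≤ mΩ) [SigmaFinite (μ.trim hm)] {ξ : Ω → ℝ}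
    (hξ : GenCondExpZero m μ ξ) (hξm : AEStronglyMeasurable ξ μ)
    (hpos : Integrable (fun ω => max (ξ ω) 0) μ) : Integrable ξ μ ∧ ∫ ω, ξ ω ∂μ = 0 := by
  obtain ⟨A, hA, hAm, hAU, hAξ⟩ := hξ
  have hξA : ∀ n, IntegrableOn ξ (A n) μ := fun n =>
    (integrable_indicator_iff (hm _ (hAm n))).1 (hAξ n).1
  have hzero : ∀ n, ∫ ω in A n, ξ ω ∂μ = 0 := fun n =>
    setIntegral_eq_zero_of_condExp_indicator_ae_eq_zero hm (hAξ n).1 (hAξ n).2 (hAm n) subset_rfl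
  have hneg : Integrable (fun ω => max (-ξ ω) 0) μ := by
    refine integrable_of_setIntegral_le_of_monotone (hξm.neg.sup aestronglyMeasurable_const)
      (fun ω => le_max_right _ _) hA hAU (fun n => (hξA n).neg_part)
      (C := ∫ ω, max (ξ ω) 0 ∂μ) fun n => ?_
    calc ∫ ω in A n, max (-ξ ω) 0 ∂μ
        = ∫ ω in A n, max (ξ ω) 0 ∂μ - ∫ ω in A n, ξ ω ∂μ := by
          rw [← integral_sub (hξA n).pos_part (hξA n)]
          congr with ω
          linarith [max_zero_sub_max_neg_zero_eq_self (ξ ω)]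
      _ ≤ ∫ ω, max (ξ ω) 0 ∂μ := by
          rw [hzero n, sub_zero]
          exact setIntegral_le_integral hpos (ae_of_all _ fun ω => le_max_right _ _)
  have hint : Integrable ξ μ :=
    (hpos.sub hneg).congr (ae_of_all _ fun ω => max_zero_sub_max_neg_zero_eq_self (ξ ω))
  refine ⟨hint, ?_⟩
  have hlim := tendsto_setIntegral_of_monotone (fun n => hm _ (hAm n)) hA
    (by rw [hAU]; exact hint.integrableOn)
  rw [hAU, Measure.restrict_univ] at hlim
  exact tendsto_nhds_unique hlim (by simp only [hzero]; exact tendsto_const_nhds)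

theorem integrable_add_and_integral_add (hm : m ≤ mΩ) [SigmaFinite (μ.trim hm)] {Z ξ : Ω → ℝ}
    (hξ : GenCondExpZero m μ ξ) (hξm : AEStronglyMeasurable ξ μ) (hZ : Integrable Z μ)
    (hpos : Integrable (fun ω => max (Z ω + ξ ω) 0) μ) :
    Integrable (fun ω => Z ω + ξ ω) μ ∧ ∫ ω, Z ω + ξ ω ∂μ = ∫ ω, Z ω ∂μ := by
  have hξpos : Integrable (fun ω => max (ξ ω) 0) μ := by
    refine (hpos.add hZ.abs).mono' (hξm.sup aestronglyMeasurable_const) (ae_of_all _ fun ω => ?_)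
    rw [Real.norm_of_nonneg (le_max_right _ _), Pi.add_apply]
    exact max_le (by linarith [le_max_left (Z ω + ξ ω) 0, neg_abs_le (Z ω)])
      (by positivity)
  obtain ⟨hint, hzero⟩ := hξ.integrable_and_integral_eq_zero hm hξm hξpos
  exact ⟨hZ.add hint, by rw [integral_add hZ hint, hzero, add_zero]⟩

theorem integrable_max_zero_of_add [IsFiniteMeasure μ] (hm : m ≤ mΩ) {Z ξ : Ω → ℝ}
    (hξ : GenCondExpZero m μ ξ) (hZ : StronglyMeasurable[m] Z)
    (hpos : Integrable (fun ω => max (Z ω + ξ ω) 0) μ) :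
    Integrable (fun ω => max (Z ω) 0) μ := by
  obtain ⟨A, hA, hAm, hAU, hAξ⟩ := hξ
  set P := {ω | 0 ≤ Z ω}
  have hPm : MeasurableSet[m] P := measurableSet_le measurable_const hZ.measurable
  let C : ℕ → Set Ω := fun n => A n ∩ {ω | |Z ω| ≤ n}
  have hCm : ∀ n, MeasurableSet[m] (C n) := fun n =>
    (hAm n).inter (measurableSet_le (measurable_abs.comp hZ.measurable) measurable_const)
  have hC : Monotone C := fun a b hab => inter_subset_inter (hA hab)
    fun ω (h : |Z ω| ≤ a) => (h.trans (by exact_mod_cast hab) : |Z ω| ≤ b)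
  have hCU : ⋃ n, C n = univ := by
    refine eq_univ_of_forall fun ω => ?_
    obtain ⟨k, hk⟩ : ∃ k, ω ∈ A k := mem_iUnion.1 (hAU.symm ▸ mem_univ ω)
    obtain ⟨N, hN⟩ := exists_nat_ge |Z ω|
    exact mem_iUnion.2 ⟨max k N, hA (le_max_left _ _) hk,
      (hN.trans (by exact_mod_cast le_max_right k N) : |Z ω| ≤ ↑(max k N))⟩
  have hZC : ∀ n, IntegrableOn Z (C n) μ := fun n =>
    Measure.integrableOn_of_bounded (measure_ne_top μ _) (hZ.mono hm).aestronglyMeasurable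
      (ae_restrict_of_forall_mem (hm _ (hCm n)) fun ω hω => hω.2)
  have hξC : ∀ n, IntegrableOn ξ (C n ∩ P) μ := fun n =>
    ((integrable_indicator_iff (hm _ (hAm n))).1 (hAξ n).1).mono_set
      (inter_subset_left.trans inter_subset_left)
  have hZP : (fun ω => max (Z ω) 0) = P.indicator Z := by
    ext ω
    by_cases h : 0 ≤ Z ω
    · simp [P, h]
    · simp [P, h, (not_le.1 h).le]
  rw [hZP]
  refine integrable_of_setIntegral_le_of_monotone
    ((hZ.mono hm).aestronglyMeasurable.indicator (hm _ hPm)) (indicator_nonneg fun _ h => h)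
    hC hCU (fun n => (hZC n).indicator (hm _ hPm))
    (C := ∫ ω, max (Z ω + ξ ω) 0 ∂μ) fun n => ?_
  have hzero : ∫ ω in C n ∩ P, ξ ω ∂μ = 0 :=
    setIntegral_eq_zero_of_condExp_indicator_ae_eq_zero hm (hAξ n).1 (hAξ n).2
      ((hCm n).inter hPm) (inter_subset_left.trans inter_subset_left)
  calc ∫ ω in C n, P.indicator Z ω ∂μ = ∫ ω in C n ∩ P, Z ω + ξ ω ∂μ := by
        rw [setIntegral_indicator (hm _ hPm), integral_add ((hZC n).mono_set inter_subset_left)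
          (hξC n), hzero, add_zero]
    _ ≤ ∫ ω in C n ∩ P, max (Z ω + ξ ω) 0 ∂μ :=
        setIntegral_mono_on (((hZC n).mono_set inter_subset_left).add (hξC n))
          hpos.integrableOn (hm _ ((hCm n).inter hPm)) fun ω _ => le_max_left _ _
    _ ≤ ∫ ω, max (Z ω + ξ ω) 0 ∂μ :=
        setIntegral_le_integral hpos (ae_of_all _ fun ω => le_max_right _ _)

end GenCondExpZero

theorem integrable_and_integral_sum_eq_zero [IsFiniteMeasure μ] (ℱ : Filtration ℕ mΩ) (T : ℕ)
    {ξ : ℕ → Ω → ℝ} (hξm : ∀ t < T, StronglyMeasurable[ℱ (t + 1)] (ξ t))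
    (hξ : ∀ t < T, GenCondExpZero (ℱ t) μ (ξ t))
    (hpos : Integrable (fun ω => max (∑ t ∈ Finset.range T, ξ t ω) 0) μ) :
    Integrable (fun ω => ∑ t ∈ Finset.range T, ξ t ω) μ ∧
      ∫ ω, ∑ t ∈ Finset.range T, ξ t ω ∂μ = 0 := by
  have hSm : ∀ k ≤ T, StronglyMeasurable[ℱ k] (fun ω => ∑ t ∈ Finset.range k, ξ t ω) :=
    fun k hk => Finset.stronglyMeasurable_fun_sum _ fun t ht =>
      have ht : t < k := Finset.mem_range.1 ht
      (hξm t (ht.trans_le hk)).mono (ℱ.mono ht)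
  have hSpos : ∀ k ≤ T, Integrable (fun ω => max (∑ t ∈ Finset.range k, ξ t ω) 0) μ := by
    intro k hk
    induction hk using Nat.decreasingInduction with
    | self => exact hpos
    | of_succ k hk ih =>
      simp only [Finset.sum_range_succ] at ih
      exact (hξ k hk).integrable_max_zero_of_add (ℱ.le k) (hSm k hk.le) ih
  have hS : ∀ k ≤ T, Integrable (fun ω => ∑ t ∈ Finset.range k, ξ t ω) μ ∧
      ∫ ω, ∑ t ∈ Finset.range k, ξ t ω ∂μ = 0 := by
    intro k hk
    induction k with
    | zero => simp
    | succ k ih =>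
      obtain ⟨hint, hzero⟩ := ih (by omega)
      have hpos' := hSpos (k + 1) hk
      simp only [Finset.sum_range_succ] at hpos' ⊢
      obtain ⟨hint_succ, hadd⟩ := (hξ k hk).integrable_add_and_integral_add (ℱ.le k)
        ((hξm k hk).mono (ℱ.le _)).aestronglyMeasurable hint hpos'
      exact ⟨hint_succ, hadd.trans hzero⟩
  exact hS T le_rfl

end

/-- Example 4.3: if `s` is a `d`-dimensional martingale and `x` an
adapted process such that the positive part of the stochastic integral
`Σ_{t<T} x_t · Δs_{t+1}` is integrable, then the stochastic integral is integrable with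
zero expectation. -/
theorem statement12 {Ω : Type*} {mΩ : MeasurableSpace Ω} (μ : Measure Ω)
    [IsProbabilityMeasure μ] (T d : ℕ) (𝓕 : ℕ → MeasurableSpace Ω)
    (hle : ∀ t, 𝓕 t ≤ mΩ) (hmono : ∀ s t, s ≤ t → 𝓕 s ≤ 𝓕 t)
    (s : ℕ → Ω → EuclideanSpace ℝ (Fin d))
    (hs_adapted : ∀ t ≤ T, Measurable[𝓕 t] (s t))
    (hs_int : ∀ t ≤ T, Integrable (s t) μ)
    (hmart : ∀ t < T, μ[fun ω => s (t + 1) ω - s t ω|𝓕 t] =ᵐ[μ] 0)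
    (x : ℕ → Ω → EuclideanSpace ℝ (Fin d))
    (hx : ∀ t < T, Measurable[𝓕 t] (x t))
    (hpos : Integrable
      (fun ω => max (∑ t ∈ Finset.range T, ⟪x t ω, s (t + 1) ω - s t ω⟫) 0) μ) :
    Integrable (fun ω => ∑ t ∈ Finset.range T, ⟪x t ω, s (t + 1) ω - s t ω⟫) μ ∧
    ∫ ω, ∑ t ∈ Finset.range T, ⟪x t ω, s (t + 1) ω - s t ω⟫ ∂μ = 0 := by
  let ℱ : Filtration ℕ mΩ := ⟨𝓕, hmono, hle⟩
  refine integrable_and_integral_sum_eq_zero ℱ T (fun t ht => ?_) (fun t ht => ?_) hpos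
  · have hF : 𝓕 t ≤ 𝓕 (t + 1) := hmono _ _ t.le_succ
    exact (((hx t ht).mono hF le_rfl).inner
      ((hs_adapted _ ht).sub ((hs_adapted t ht.le).mono hF le_rfl))).stronglyMeasurable
  · exact genCondExpZero_inner (hle t) (hx t ht).stronglyMeasurable
      ((hs_int _ ht).sub (hs_int t ht.le)) (hmart t ht)
end

section
/- Let R = (R_t)_{t=0}^T be an adapted real-valued process with each R_t integrable, and let S be its Snell envelope: S_{T+1} := 0 and S_t := max{ R_t , E[S_{t+1} | F_t] } for t = T,…,0. Consider the relaxed optimal stopping problem (ROS): maximize E[Σ_{t=0}^T R_t x_t] over adapted processes x = (x_t)_{t=0}^T with x_t ≥ 0 and Σ_{t=0}^T x_t ≤ 1 a.s. Then: (i) the optimum value of (ROS) equals E[S₀]; (ii) a feasible adapted x is optimal for (ROS) if and only if for every t = 0,…,T, x_t(ω) maximizes ξ ↦ (R_t(ω) − E[S_{t+1}|F_t](ω))·ξ over ξ ∈ [0, 1 − Σ_{s=0}^{t−1} x_s(ω)] for a.e. ω; and (iii) there exists a stopping time τ : Ω → {0,…,T+1} (with {τ ≤ t} ∈ F_t for all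 t) such that E[R_τ] = E[S₀], where R_{T+1} := 0; in particular sup_{τ} E[R_τ] = E[S₀]. -/
open MeasureTheory

noncomputable section

/-- A feasible relaxed stopping strategy: adapted, nonnegative, with total mass at most
one. -/
def FeasibleROS {Ω : Type*} {mΩ : MeasurableSpace Ω} (μ : Measure Ω) (T : ℕ)
    (𝓕 : ℕ → MeasurableSpace Ω) (x : ℕ → Ω → ℝ) : Prop :=
  (∀ t ≤ T, Measurable[𝓕 t] (x t)) ∧
  ∀ᵐ ω ∂μ, (∀ t ≤ T, 0 ≤ x t ω) ∧ ∑ t ∈ Finset.range (T + 1), x t ω ≤ 1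

/-!
Let `y t = 1 - ∑ s < t, x s` be the mass a relaxed strategy has not spent before time `t`.
Pointwise, `S t * y t = R t * x t + gap t + E[S (t+1) | 𝓕 t] * y (t+1)` with
`gap t = (S t - R t) * x t + (S t - E[S (t+1) | 𝓕 t]) * y (t+1) ≥ 0`, and since `y (t+1)` is
`𝓕 t`-measurable the tower property replaces the conditional expectation by `S (t+1)`.
Telescoping from `y 0 = 1` to `S (T+1) = 0` gives `E[S 0] = E[∑ R t * x t] + ∑ E[gap t]`, so the
relaxed value is at most `E[S 0]`, with equality iff every gap vanishes a.e., which is the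
scenariowise maximization condition. The first time `R t ≥ E[S (t+1) | 𝓕 t]` is a stopping time
whose indicator has no gaps.
-/

open Finset

section RelaxedStopping

theorem max_slack_eq_zero_iff {a g s x y : ℝ} (hs : s = max a g) (hx : 0 ≤ x) (hxy : x ≤ y) :
    (s - a) * x + (s - g) * (y - x) = 0 ↔ ∀ ξ, 0 ≤ ξ → ξ ≤ y → (a - g) * ξ ≤ (a - g) * x := by
  subst hs
  rcases le_total a g with hag | hga
  · rw [max_eq_right hag]
    constructor
    · intro h ξ hξ _
      nlinarith
    · intro h
      nlinarith [h 0 le_rfl (hx.trans hxy)]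
  · rw [max_eq_left hga]
    constructor
    · intro h ξ _ hξ
      nlinarith
    · intro h
      nlinarith [h y (hx.trans hxy) le_rfl]

variable {Ω : Type*} {mΩ : MeasurableSpace Ω} {μ : Measure Ω} {T : ℕ}
  {𝓕 : ℕ → MeasurableSpace Ω} {R S x : ℕ → Ω → ℝ}

def remainingMass (x : ℕ → Ω → ℝ) (t : ℕ) (ω : Ω) : ℝ := 1 - ∑ s ∈ range t, x s ω

@[simp]
theorem remainingMass_zero (ω : Ω) : remainingMass x 0 ω = 1 := by
  simp [remainingMass]

theorem remainingMass_succ (t : ℕ) (ω : Ω) :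
    remainingMass x (t + 1) ω = remainingMass x t ω - x t ω := by
  simp only [remainingMass, sum_range_succ]
  ring

namespace FeasibleROS

theorem ae_bounds (hx : FeasibleROS μ T 𝓕 x) :
    ∀ᵐ ω ∂μ, ∀ t ≤ T, 0 ≤ x t ω ∧ 0 ≤ remainingMass x (t + 1) ω ∧ remainingMass x t ω ≤ 1 := by
  filter_upwards [hx.2] with ω ⟨hnonneg, hsum⟩ t ht
  have hprefix_le : ∑ s ∈ range (t + 1), x s ω ≤ ∑ s ∈ range (T + 1), x s ω :=
    sum_le_sum_of_subset_of_nonneg (range_subset_range.2 (by omega))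
      fun s hs _ => hnonneg s (by simp at hs; omega)
  have hprefix_nonneg : 0 ≤ ∑ s ∈ range t, x s ω :=
    sum_nonneg fun s hs => hnonneg s (by simp at hs; omega)
  simp only [remainingMass]
  exact ⟨hnonneg t ht, by linarith, by linarith⟩

theorem ae_norm_le_one (hx : FeasibleROS μ T 𝓕 x) {t : ℕ} (ht : t ≤ T) :
    ∀ᵐ ω ∂μ, ‖x t ω‖ ≤ 1 := by
  filter_upwards [hx.ae_bounds] with ω h
  obtain ⟨h₀, h₁, h₂⟩ := h t ht
  rw [remainingMass_succ] at h₁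
  rw [Real.norm_eq_abs, abs_le]
  constructor <;> linarith

theorem ae_norm_remainingMass_le_one (hx : FeasibleROS μ T 𝓕 x) {t : ℕ} (ht : t ≤ T) :
    ∀ᵐ ω ∂μ, ‖remainingMass x (t + 1) ω‖ ≤ 1 := by
  filter_upwards [hx.ae_bounds] with ω h
  obtain ⟨h₀, h₁, h₂⟩ := h t ht
  rw [remainingMass_succ] at h₁ ⊢
  rw [Real.norm_eq_abs, abs_le]
  constructor <;> linarith

theorem measurable_remainingMass (hmono : ∀ s t, s ≤ t → 𝓕 s ≤ 𝓕 t)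
    (hx : FeasibleROS μ T 𝓕 x) {t : ℕ} (ht : t ≤ T) :
    Measurable[𝓕 t] (remainingMass x (t + 1)) :=
  measurable_const.sub <| Finset.measurable_sum _ fun s hs =>
    (hx.1 s (by simp at hs; omega)).mono (hmono s t (by simp at hs; omega)) le_rfl

theorem integrable_mul (hle : ∀ t, 𝓕 t ≤ mΩ) (hx : FeasibleROS μ T 𝓕 x) {f : Ω → ℝ}
    (hf : Integrable f μ) {t : ℕ} (ht : t ≤ T) : Integrable (fun ω => f ω * x t ω) μ :=
  hf.mul_bdd ((hx.1 t ht).mono (hle t) le_rfl).aestronglyMeasurable (hx.ae_norm_le_one ht)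

theorem integrable_mul_remainingMass (hle : ∀ t, 𝓕 t ≤ mΩ)
    (hmono : ∀ s t, s ≤ t → 𝓕 s ≤ 𝓕 t) (hx : FeasibleROS μ T 𝓕 x) {f : Ω → ℝ}
    (hf : Integrable f μ) {t : ℕ} (ht : t ≤ T) :
    Integrable (fun ω => f ω * remainingMass x (t + 1) ω) μ :=
  hf.mul_bdd ((hx.measurable_remainingMass hmono ht).mono (hle t) le_rfl).aestronglyMeasurable
    (hx.ae_norm_remainingMass_le_one ht)

end FeasibleROS

theorem integrable_snell (hR : ∀ t ≤ T, Integrable (R t) μ) (hS_top : S (T + 1) = 0)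
    (hSnell : ∀ t ≤ T, S t =ᵐ[μ] fun ω => max (R t ω) ((μ[S (t + 1)|𝓕 t]) ω))
    {t : ℕ} (ht : t ≤ T + 1) : Integrable (S t) μ := by
  induction ht using Nat.decreasingInduction with
  | self => rw [hS_top]; exact integrable_zero _ _ _
  | of_succ t ht _ =>
    exact ((hR t (by omega)).sup integrable_condExp).congr (hSnell t (by omega)).symm

theorem integral_condExp_mul_of_stronglyMeasurable {m : MeasurableSpace Ω} (hm : m ≤ mΩ)
    [SigmaFinite (μ.trim hm)] {f g : Ω → ℝ} (hg : StronglyMeasurable[m] g)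
    (hfg : Integrable (fun ω => f ω * g ω) μ) (hf : Integrable f μ) :
    ∫ ω, (μ[f|m]) ω * g ω ∂μ = ∫ ω, f ω * g ω ∂μ :=
  calc ∫ ω, (μ[f|m]) ω * g ω ∂μ = ∫ ω, (μ[f * g|m]) ω ∂μ :=
        integral_congr_ae (condExp_mul_of_stronglyMeasurable_right hg hfg hf).symm
    _ = ∫ ω, f ω * g ω ∂μ := integral_condExp hm

def snellGap (μ : Measure Ω) (𝓕 : ℕ → MeasurableSpace Ω) (R S x : ℕ → Ω → ℝ) (t : ℕ)
    (ω : Ω) : ℝ :=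
  (S t ω - R t ω) * x t ω + (S t ω - (μ[S (t + 1)|𝓕 t]) ω) * remainingMass x (t + 1) ω

theorem snellGap_nonneg
    (hSnell : ∀ t ≤ T, S t =ᵐ[μ] fun ω => max (R t ω) ((μ[S (t + 1)|𝓕 t]) ω))
    (hx : FeasibleROS μ T 𝓕 x) {t : ℕ} (ht : t ≤ T) : 0 ≤ᵐ[μ] snellGap μ 𝓕 R S x t := by
  filter_upwards [hSnell t ht, hx.ae_bounds] with ω hS hb
  obtain ⟨hx₀, hrem, -⟩ := hb t ht
  have hR : R t ω ≤ S t ω := hS ▸ le_max_left _ _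
  have hG : (μ[S (t + 1)|𝓕 t]) ω ≤ S t ω := hS ▸ le_max_right _ _
  exact add_nonneg (mul_nonneg (sub_nonneg.2 hR) hx₀) (mul_nonneg (sub_nonneg.2 hG) hrem)

theorem integrable_snellGap (hle : ∀ t, 𝓕 t ≤ mΩ) (hmono : ∀ s t, s ≤ t → 𝓕 s ≤ 𝓕 t)
    (hR : ∀ t ≤ T, Integrable (R t) μ) (hS_top : S (T + 1) = 0)
    (hSnell : ∀ t ≤ T, S t =ᵐ[μ] fun ω => max (R t ω) ((μ[S (t + 1)|𝓕 t]) ω))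
    (hx : FeasibleROS μ T 𝓕 x) {t : ℕ} (ht : t ≤ T) :
    Integrable (snellGap μ 𝓕 R S x t) μ := by
  have hS : Integrable (S t) μ := integrable_snell hR hS_top hSnell (by omega)
  exact (hx.integrable_mul hle (hS.sub (hR t ht)) ht).add
    (hx.integrable_mul_remainingMass hle hmono (hS.sub integrable_condExp) ht)

theorem integral_mul_remainingMass_eq [IsFiniteMeasure μ] (hle : ∀ t, 𝓕 t ≤ mΩ)
    (hmono : ∀ s t, s ≤ t → 𝓕 s ≤ 𝓕 t)
    (hR : ∀ t ≤ T, Integrable (R t) μ) (hS_top : S (T + 1) = 0)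
    (hSnell : ∀ t ≤ T, S t =ᵐ[μ] fun ω => max (R t ω) ((μ[S (t + 1)|𝓕 t]) ω))
    (hx : FeasibleROS μ T 𝓕 x) {t : ℕ} (ht : t ≤ T) :
    ∫ ω, S t ω * remainingMass x t ω ∂μ =
      ∫ ω, R t ω * x t ω ∂μ + ∫ ω, snellGap μ 𝓕 R S x t ω ∂μ +
        ∫ ω, S (t + 1) ω * remainingMass x (t + 1) ω ∂μ := by
  have hRx := hx.integrable_mul hle (hR t ht) ht
  have hGap := integrable_snellGap hle hmono hR hS_top hSnell hx ht
  have hGrem := hx.integrable_mul_remainingMass hle hmono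
    (integrable_condExp (m := 𝓕 t) (f := S (t + 1))) ht
  have hpointwise : (fun ω => S t ω * remainingMass x t ω) = fun ω =>
      (R t ω * x t ω + snellGap μ 𝓕 R S x t ω) +
        (μ[S (t + 1)|𝓕 t]) ω * remainingMass x (t + 1) ω := by
    funext ω
    simp only [snellGap, remainingMass_succ]
    ring
  rw [hpointwise,
    integral_add (f := fun ω => R t ω * x t ω + snellGap μ 𝓕 R S x t ω) (hRx.add hGap) hGrem,
    integral_add hRx hGap,
    integral_condExp_mul_of_stronglyMeasurable (hle t)
      (hx.measurable_remainingMass hmono ht).stronglyMeasurable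
      (hx.integrable_mul_remainingMass hle hmono
        (integrable_snell hR hS_top hSnell (by omega)) ht)
      (integrable_snell hR hS_top hSnell (by omega))]

def relaxedReward (μ : Measure Ω) (T : ℕ) (R x : ℕ → Ω → ℝ) : ℝ :=
  ∫ ω, ∑ t ∈ range (T + 1), R t ω * x t ω ∂μ

theorem integral_snell_zero_eq [IsFiniteMeasure μ] (hle : ∀ t, 𝓕 t ≤ mΩ)
    (hmono : ∀ s t, s ≤ t → 𝓕 s ≤ 𝓕 t)
    (hR : ∀ t ≤ T, Integrable (R t) μ) (hS_top : S (T + 1) = 0)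
    (hSnell : ∀ t ≤ T, S t =ᵐ[μ] fun ω => max (R t ω) ((μ[S (t + 1)|𝓕 t]) ω))
    (hx : FeasibleROS μ T 𝓕 x) :
    ∫ ω, S 0 ω ∂μ =
      relaxedReward μ T R x + ∑ t ∈ range (T + 1), ∫ ω, snellGap μ 𝓕 R S x t ω ∂μ := by
  have htelescope : ∀ n ≤ T + 1, ∫ ω, S 0 ω ∂μ =
      ∑ t ∈ range n, ∫ ω, R t ω * x t ω ∂μ + ∑ t ∈ range n, ∫ ω, snellGap μ 𝓕 R S x t ω ∂μ +
        ∫ ω, S n ω * remainingMass x n ω ∂μ := by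
    intro n hn
    induction n with
    | zero => simp
    | succ n ih =>
      rw [ih (by omega), integral_mul_remainingMass_eq hle hmono hR hS_top hSnell hx (by omega),
        sum_range_succ, sum_range_succ]
      ring
  rw [htelescope (T + 1) le_rfl, hS_top, relaxedReward, integral_finsetSum _ fun t ht =>
    hx.integrable_mul hle (hR t (by simp at ht; omega)) (by simp at ht; omega)]
  simp

theorem relaxedReward_le_and_eq_iff [IsFiniteMeasure μ] (hle : ∀ t, 𝓕 t ≤ mΩ)
    (hmono : ∀ s t, s ≤ t → 𝓕 s ≤ 𝓕 t)
    (hR : ∀ t ≤ T, Integrable (R t) μ) (hS_top : S (T + 1) = 0)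
    (hSnell : ∀ t ≤ T, S t =ᵐ[μ] fun ω => max (R t ω) ((μ[S (t + 1)|𝓕 t]) ω))
    (hx : FeasibleROS μ T 𝓕 x) :
    relaxedReward μ T R x ≤ ∫ ω, S 0 ω ∂μ ∧
      (relaxedReward μ T R x = ∫ ω, S 0 ω ∂μ ↔
        ∀ t ≤ T, snellGap μ 𝓕 R S x t =ᵐ[μ] 0) := by
  have hGap_nonneg : ∀ t ∈ range (T + 1), 0 ≤ ∫ ω, snellGap μ 𝓕 R S x t ω ∂μ := fun t ht =>
    integral_nonneg_of_ae (snellGap_nonneg hSnell hx (by simp at ht; omega))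
  rw [integral_snell_zero_eq hle hmono hR hS_top hSnell hx]
  refine ⟨le_add_of_nonneg_right (sum_nonneg hGap_nonneg), ?_⟩
  rw [left_eq_add, sum_eq_zero_iff_of_nonneg hGap_nonneg]
  refine forall_congr' fun t => ?_
  simp only [mem_range, Nat.lt_succ_iff]
  refine forall_congr' fun ht => ?_
  exact integral_eq_zero_iff_of_nonneg_ae (snellGap_nonneg hSnell hx ht)
    (integrable_snellGap hle hmono hR hS_top hSnell hx ht)

theorem snellGap_ae_eq_zero_iff
    (hSnell : ∀ t ≤ T, S t =ᵐ[μ] fun ω => max (R t ω) ((μ[S (t + 1)|𝓕 t]) ω))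
    (hx : FeasibleROS μ T 𝓕 x) {t : ℕ} (ht : t ≤ T) :
    snellGap μ 𝓕 R S x t =ᵐ[μ] 0 ↔
      ∀ᵐ ω ∂μ, ∀ ξ : ℝ, 0 ≤ ξ → ξ ≤ remainingMass x t ω →
        (R t ω - (μ[S (t + 1)|𝓕 t]) ω) * ξ ≤ (R t ω - (μ[S (t + 1)|𝓕 t]) ω) * x t ω := by
  refine Filter.eventually_congr ?_
  filter_upwards [hSnell t ht, hx.ae_bounds] with ω hS hb
  obtain ⟨hx₀, hrem, -⟩ := hb t ht
  rw [remainingMass_succ] at hrem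
  rw [Pi.zero_apply, snellGap, remainingMass_succ]
  exact max_slack_eq_zero_iff hS hx₀ (by linarith)

def stopIndicator (τ : Ω → ℕ) (t : ℕ) (ω : Ω) : ℝ := if τ ω = t then 1 else 0

theorem remainingMass_stopIndicator (τ : Ω → ℕ) (t : ℕ) (ω : Ω) :
    remainingMass (stopIndicator τ) t ω = if τ ω < t then 0 else 1 := by
  simp only [remainingMass, stopIndicator]
  rw [sum_ite_eq]
  simp only [mem_range]
  split_ifs <;> norm_num

theorem measurableSet_eq_of_measurableSet_le (hmono : ∀ s t, s ≤ t → 𝓕 s ≤ 𝓕 t) {τ : Ω → ℕ}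
    (hτ : ∀ t ≤ T, MeasurableSet[𝓕 t] {ω | τ ω ≤ t}) {t : ℕ} (ht : t ≤ T) :
    MeasurableSet[𝓕 t] {ω | τ ω = t} := by
  cases t with
  | zero => simpa using hτ 0 ht
  | succ n =>
    have hdiff : {ω | τ ω = n + 1} = {ω | τ ω ≤ n + 1} \ {ω | τ ω ≤ n} := by
      ext ω
      simp only [Set.mem_ofPred_eq, Set.mem_sdiff]
      omega
    rw [hdiff]
    exact (hτ (n + 1) ht).diff (hmono n (n + 1) n.le_succ _ (hτ n (by omega)))

theorem feasibleROS_stopIndicator (hmono : ∀ s t, s ≤ t → 𝓕 s ≤ 𝓕 t) {τ : Ω → ℕ}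
    (hτ : ∀ t ≤ T, MeasurableSet[𝓕 t] {ω | τ ω ≤ t}) :
    FeasibleROS μ T 𝓕 (stopIndicator τ) := by
  refine ⟨fun t ht => Measurable.ite (measurableSet_eq_of_measurableSet_le hmono hτ ht)
    measurable_const measurable_const, .of_forall fun ω => ⟨fun t _ => ?_, ?_⟩⟩
  · unfold stopIndicator
    positivity
  · have hrem := remainingMass_stopIndicator τ (T + 1) ω
    simp only [remainingMass] at hrem
    split_ifs at hrem <;> linarith

theorem relaxedReward_stopIndicator (τ : Ω → ℕ) :
    relaxedReward μ T R (stopIndicator τ) = ∫ ω, (if τ ω ≤ T then R (τ ω) ω else 0) ∂μ := by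
  simp only [relaxedReward, stopIndicator, mul_ite, mul_one, mul_zero, sum_ite_eq, mem_range,
    Nat.lt_succ_iff]

-- The disjunct `T < t` makes the set nonempty (`sInf ∅ = 0`) and yields `T + 1` when `R` never
-- dominates `G`.
def firstDominanceTime (T : ℕ) (R G : ℕ → Ω → ℝ) (ω : Ω) : ℕ :=
  sInf {t | T < t ∨ G t ω ≤ R t ω}

section firstDominanceTime

variable {G : ℕ → Ω → ℝ} {ω : Ω} {t : ℕ}

theorem firstDominanceTime_le (ω : Ω) : firstDominanceTime T R G ω ≤ T + 1 :=
  Nat.sInf_le (Or.inl (lt_add_one T))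

theorem firstDominanceTime_spec :
    T < firstDominanceTime T R G ω ∨
      G (firstDominanceTime T R G ω) ω ≤ R (firstDominanceTime T R G ω) ω :=
  Nat.sInf_mem (s := {t | T < t ∨ G t ω ≤ R t ω}) ⟨T + 1, Or.inl (lt_add_one T)⟩

theorem lt_of_lt_firstDominanceTime (hτ : t < firstDominanceTime T R G ω) : R t ω < G t ω := by
  have := Nat.notMem_of_lt_sInf hτ
  simp only [Set.mem_ofPred_eq, not_or, not_le] at this
  exact this.2

theorem firstDominanceTime_le_iff (ht : t ≤ T) :
    firstDominanceTime T R G ω ≤ t ↔ ∃ s ≤ t, G s ω ≤ R s ω := by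
  constructor
  · intro hτ
    exact ⟨_, hτ, firstDominanceTime_spec.resolve_left (by omega)⟩
  · rintro ⟨s, hst, hs⟩
    exact (Nat.sInf_le (Or.inr hs)).trans hst

theorem measurableSet_firstDominanceTime_le (hmono : ∀ s t, s ≤ t → 𝓕 s ≤ 𝓕 t)
    (hR : ∀ t ≤ T, Measurable[𝓕 t] (R t)) (hG : ∀ t ≤ T, Measurable[𝓕 t] (G t)) (ht : t ≤ T) :
    MeasurableSet[𝓕 t] {ω | firstDominanceTime T R G ω ≤ t} := by
  have hunion : {ω | firstDominanceTime T R G ω ≤ t} = ⋃ s ∈ Set.Iic t, {ω | G s ω ≤ R s ω} := by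
    ext ω
    simp [firstDominanceTime_le_iff ht]
  rw [hunion]
  exact MeasurableSet.biUnion (Set.to_countable _) fun s (hs : s ≤ t) =>
    measurableSet_le ((hG s (by omega)).mono (hmono s t hs) le_rfl)
      ((hR s (by omega)).mono (hmono s t hs) le_rfl)

end firstDominanceTime

theorem snellGap_stopIndicator_firstDominanceTime
    (hSnell : ∀ t ≤ T, S t =ᵐ[μ] fun ω => max (R t ω) ((μ[S (t + 1)|𝓕 t]) ω)) {t : ℕ}
    (ht : t ≤ T) :
    snellGap μ 𝓕 R S (stopIndicator (firstDominanceTime T R fun t => μ[S (t + 1)|𝓕 t])) t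
      =ᵐ[μ] 0 := by
  set τ := firstDominanceTime T R fun t => μ[S (t + 1)|𝓕 t]
  filter_upwards [hSnell t ht] with ω hS
  simp only [snellGap, stopIndicator, remainingMass_stopIndicator, Pi.zero_apply]
  rcases lt_trichotomy (τ ω) t with hlt | heq | hgt
  · simp [hlt.ne, hlt.trans (lt_add_one t)]
  · have hdom : (μ[S (t + 1)|𝓕 t]) ω ≤ R t ω :=
      heq ▸ firstDominanceTime_spec.resolve_left (not_lt.2 (heq.trans_le ht))
    simp [heq, hS, max_eq_left hdom]
  · have hcont : R t ω < (μ[S (t + 1)|𝓕 t]) ω := lt_of_lt_firstDominanceTime hgt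
    simp [hgt.ne', show ¬τ ω < t + 1 by omega, hS, max_eq_right hcont.le]

end RelaxedStopping

theorem statement18_general {Ω : Type*} {mΩ : MeasurableSpace Ω} (μ : Measure Ω)
    [IsProbabilityMeasure μ] (T : ℕ) (𝓕 : ℕ → MeasurableSpace Ω)
    (hle : ∀ t, 𝓕 t ≤ mΩ) (hmono : ∀ s t, s ≤ t → 𝓕 s ≤ 𝓕 t)
    (R : ℕ → Ω → ℝ)
    (hR_adapted : ∀ t ≤ T, Measurable[𝓕 t] (R t))
    (hR_int : ∀ t ≤ T, Integrable (R t) μ)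
    (S : ℕ → Ω → ℝ)
    (hS_top : S (T + 1) = 0)
    (hSnell : ∀ t ≤ T, S t =ᵐ[μ] fun ω => max (R t ω) ((μ[S (t + 1)|𝓕 t]) ω)) :
    ((⨆ x : {x : ℕ → Ω → ℝ // FeasibleROS μ T 𝓕 x},
        ∫ ω, ∑ t ∈ Finset.range (T + 1), R t ω * x.1 t ω ∂μ) = ∫ ω, S 0 ω ∂μ) ∧
    (∀ x : ℕ → Ω → ℝ, FeasibleROS μ T 𝓕 x →
      ((∀ x' : ℕ → Ω → ℝ, FeasibleROS μ T 𝓕 x' →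
          ∫ ω, ∑ t ∈ Finset.range (T + 1), R t ω * x' t ω ∂μ ≤
            ∫ ω, ∑ t ∈ Finset.range (T + 1), R t ω * x t ω ∂μ) ↔
        (∀ t ≤ T, ∀ᵐ ω ∂μ, ∀ ξ : ℝ, 0 ≤ ξ → ξ ≤ 1 - ∑ s ∈ Finset.range t, x s ω →
          (R t ω - (μ[S (t + 1)|𝓕 t]) ω) * ξ ≤
            (R t ω - (μ[S (t + 1)|𝓕 t]) ω) * x t ω))) ∧
    (∃ τ : Ω → ℕ, (∀ ω, τ ω ≤ T + 1) ∧
      (∀ t ≤ T, MeasurableSet[𝓕 t] {ω | τ ω ≤ t}) ∧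
      ∫ ω, (if τ ω ≤ T then R (τ ω) ω else 0) ∂μ = ∫ ω, S 0 ω ∂μ) ∧
    ((⨆ τ : {τ : Ω → ℕ // (∀ ω, τ ω ≤ T + 1) ∧
        ∀ t ≤ T, MeasurableSet[𝓕 t] {ω | τ ω ≤ t}},
        ∫ ω, (if τ.1 ω ≤ T then R (τ.1 ω) ω else 0) ∂μ) = ∫ ω, S 0 ω ∂μ) := by
  have hvalue := fun x (hx : FeasibleROS μ T 𝓕 x) =>
    relaxedReward_le_and_eq_iff hle hmono hR_int hS_top hSnell hx
  set τ := firstDominanceTime T R fun t => μ[S (t + 1)|𝓕 t]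
  have hτ : ∀ t ≤ T, MeasurableSet[𝓕 t] {ω | τ ω ≤ t} := fun t ht =>
    measurableSet_firstDominanceTime_le hmono hR_adapted
      (fun t _ => stronglyMeasurable_condExp.measurable) ht
  have hfeas := feasibleROS_stopIndicator (μ := μ) hmono hτ
  have hopt : relaxedReward μ T R (stopIndicator τ) = ∫ ω, S 0 ω ∂μ :=
    (hvalue _ hfeas).2.2 fun t ht => snellGap_stopIndicator_firstDominanceTime hSnell ht
  have hoptimal_iff : ∀ x, FeasibleROS μ T 𝓕 x → ((∀ x', FeasibleROS μ T 𝓕 x' →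
      relaxedReward μ T R x' ≤ relaxedReward μ T R x) ↔ relaxedReward μ T R x = ∫ ω, S 0 ω ∂μ) :=
    fun x hx => ⟨fun h => le_antisymm (hvalue x hx).1 (hopt ▸ h _ hfeas),
      fun h x' hx' => h ▸ (hvalue x' hx').1⟩
  refine ⟨?_, fun x hx => ?_, ⟨τ, firstDominanceTime_le, hτ, ?_⟩, ?_⟩
  · exact (IsMaxOn.iSup_eq (s := {x | FeasibleROS μ T 𝓕 x}) hfeas
      (isMaxOn_iff.2 fun x hx => (hoptimal_iff _ hfeas).2 hopt x hx)).trans hopt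
  · exact (hoptimal_iff x hx).trans <| (hvalue x hx).2.trans <|
      forall₂_congr fun t ht => snellGap_ae_eq_zero_iff hSnell hx ht
  · exact (relaxedReward_stopIndicator τ).symm.trans hopt
  · refine (IsMaxOn.iSup_eq (f := fun σ : Ω → ℕ => ∫ ω, (if σ ω ≤ T then R (σ ω) ω else 0) ∂μ)
      (s := {σ | (∀ ω, σ ω ≤ T + 1) ∧ ∀ t ≤ T, MeasurableSet[𝓕 t] {ω | σ ω ≤ t}})
      ⟨firstDominanceTime_le, hτ⟩ (isMaxOn_iff.2 fun σ hσ => ?_)).trans ?_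
    · rw [← relaxedReward_stopIndicator, ← relaxedReward_stopIndicator, hopt]
      exact (hvalue _ (feasibleROS_stopIndicator hmono hσ.2)).1
    · exact (relaxedReward_stopIndicator τ).symm.trans hopt

/-- Theorem 5.3, optimal stopping: the optimum value of the relaxed
stopping problem (ROS) is `E[S₀]`, optimal relaxed strategies are characterized by
scenariowise maximization, and there is an optimal genuine stopping time, so that the
optimum values of (OS) and (ROS) coincide with `E[S₀]`. -/
theorem statement18 {Ω : Type*} {mΩ : MeasurableSpace Ω} (μ : Measure Ω)
    [IsProbabilityMeasure μ] (T : ℕ) (𝓕 : ℕ → MeasurableSpace Ω)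
    (hle : ∀ t, 𝓕 t ≤ mΩ) (hmono : ∀ s t, s ≤ t → 𝓕 s ≤ 𝓕 t)
    (R : ℕ → Ω → ℝ)
    (hR_adapted : ∀ t ≤ T, Measurable[𝓕 t] (R t))
    (hR_int : ∀ t ≤ T, Integrable (R t) μ)
    (S : ℕ → Ω → ℝ)
    (hS_top : S (T + 1) = 0)
    (hS_adapted : ∀ t ≤ T, Measurable[𝓕 t] (S t))
    (hSnell : ∀ t ≤ T, S t =ᵐ[μ] fun ω => max (R t ω) ((μ[S (t + 1)|𝓕 t]) ω)) :
    ((⨆ x : {x : ℕ → Ω → ℝ // FeasibleROS μ T 𝓕 x},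
        ∫ ω, ∑ t ∈ Finset.range (T + 1), R t ω * x.1 t ω ∂μ) = ∫ ω, S 0 ω ∂μ) ∧
    (∀ x : ℕ → Ω → ℝ, FeasibleROS μ T 𝓕 x →
      ((∀ x' : ℕ → Ω → ℝ, FeasibleROS μ T 𝓕 x' →
          ∫ ω, ∑ t ∈ Finset.range (T + 1), R t ω * x' t ω ∂μ ≤
            ∫ ω, ∑ t ∈ Finset.range (T + 1), R t ω * x t ω ∂μ) ↔
        (∀ t ≤ T, ∀ᵐ ω ∂μ, ∀ ξ : ℝ, 0 ≤ ξ → ξ ≤ 1 - ∑ s ∈ Finset.range t, x s ω →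
          (R t ω - (μ[S (t + 1)|𝓕 t]) ω) * ξ ≤
            (R t ω - (μ[S (t + 1)|𝓕 t]) ω) * x t ω))) ∧
    (∃ τ : Ω → ℕ, (∀ ω, τ ω ≤ T + 1) ∧
      (∀ t ≤ T, MeasurableSet[𝓕 t] {ω | τ ω ≤ t}) ∧
      ∫ ω, (if τ ω ≤ T then R (τ ω) ω else 0) ∂μ = ∫ ω, S 0 ω ∂μ) ∧
    ((⨆ τ : {τ : Ω → ℕ // (∀ ω, τ ω ≤ T + 1) ∧
        ∀ t ≤ T, MeasurableSet[𝓕 t] {ω | τ ω ≤ t}},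
        ∫ ω, (if τ.1 ω ≤ T then R (τ.1 ω) ω else 0) ∂μ) = ∫ ω, S 0 ω ∂μ) :=
  statement18_general μ T 𝓕 hle hmono R hR_adapted hR_int S hS_top hSnell
end
end

section
/- Let f : ℝⁿ×ℝ^m → ℝ∪{+∞} be a proper lower semicontinuous convex function and suppose N := { x ∈ ℝⁿ : f^∞((x,0)) ≤ 0 } is a linear subspace of ℝⁿ, where f^∞ is the recession function of f. Then p(u) := inf_{x∈ℝⁿ} f(x,u) is a convex lower semicontinuous function of u (with values in [−∞,+∞]); for every u ∈ ℝ^m the set argmin_{x∈ℝⁿ} f(x,u) ∩ N^⊥ is nonempty (in particular the infimum defining p(u) is attained); and if p is proper, then p^∞(u) = inf_{x∈ℝⁿ} f^∞((x,u)) for all u ∈ ℝ^m. -/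
open MeasureTheory ENNReal
open scoped RealInnerProductSpace

noncomputable section

/-! Along a direction `y ∈ N` both `(y, 0)` and `-(y, 0)` are directions of recession of `f`,
so `f` is invariant under translation by `(y, 0)` and the infimum over `x` may be taken over
`N^⊥`. There `f` has no nonzero direction of recession of the form `(d, 0)`, so a closed convex
set on which `f` is bounded above and `u` stays bounded contains no ray and is compact. This
gives attainment of the infimum and, projecting such compact pieces of sublevel sets, lower
semicontinuity of `p`. For the recession formula, if `p(u₀ + t u) ≤ p(u₀) + t μ` for all `t > 0`
then the closed convex set `{(x, t) : x ∈ N^⊥, t ≥ 0, f(x, u₀ + t u) ≤ p(u₀) + t μ}` is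
unbounded, hence contains a ray `(x₀, 0) + ℝ≥0 (d, s)`; here `s > 0` by the previous remark,
and `f^∞(d / s, u) ≤ μ`. -/

open Filter Topology Bornology

lemma Convex.add_smul_mem_of_forall_add_smul_mem {E : Type*} [AddCommGroup E] [Module ℝ E]
    [TopologicalSpace E] [IsTopologicalAddGroup E] [ContinuousSMul ℝ E] {A : Set E}
    (hA : Convex ℝ A)
    (hAc : IsClosed A) {c c' d : E} (hc' : c' ∈ A) (h : ∀ t : ℝ, 0 < t → c + t • d ∈ A)
    {t : ℝ} (ht : 0 < t) : c' + t • d ∈ A := by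
  have hmem : ∀ ε : ℝ, 0 < ε → ε ≤ 1 → c' + ε • (c - c') + t • d ∈ A := by
    intro ε hε₀ hε₁
    have hcomb := hA hc' (h (t / ε) (by positivity)) (a := 1 - ε) (b := ε) (by linarith) hε₀.le
      (by ring)
    convert hcomb using 1
    rw [smul_add, smul_smul, mul_div_cancel₀ _ hε₀.ne']
    module
  have hlim : Tendsto (fun ε : ℝ => c' + ε • (c - c') + t • d) (𝓝[>] 0) (𝓝 (c' + t • d)) := by
    have hcont : Continuous (fun ε : ℝ => c' + ε • (c - c') + t • d) := by fun_prop
    simpa using (hcont.tendsto 0).mono_left nhdsWithin_le_nhds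
  refine hAc.mem_of_tendsto hlim ?_
  filter_upwards [Ioc_mem_nhdsGT (zero_lt_one' ℝ)] with ε hε using hmem ε hε.1 hε.2

lemma Bornology.IsBounded.eq_zero_of_forall_add_smul_mem {E : Type*} [NormedAddCommGroup E]
    [NormedSpace ℝ E] {B : Set E} (hB : IsBounded B) {x d : E}
    (h : ∀ t : ℝ, 0 ≤ t → x + t • d ∈ B) : d = 0 := by
  obtain ⟨R, hR⟩ := (Metric.isBounded_iff_subset_closedBall x).1 hB
  by_contra hd
  have hd' : 0 < ‖d‖ := norm_pos_iff.2 hd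
  have hR' := hR (h ((|R| + 1) / ‖d‖) (by positivity))
  rw [Metric.mem_closedBall, dist_eq_norm, add_sub_cancel_left, norm_smul, Real.norm_eq_abs,
    abs_of_nonneg (by positivity), div_mul_cancel₀ _ hd'.ne'] at hR'
  linarith [le_abs_self R]

lemma Convex.exists_forall_add_smul_mem_of_not_isBounded {E : Type*} [NormedAddCommGroup E]
    [NormedSpace ℝ E] [ProperSpace E] {A : Set E} (hA : Convex ℝ A) (hAc : IsClosed A)
    (hnb : ¬ IsBounded A) {c : E} (hc : c ∈ A) :
    ∃ d ≠ 0, ∀ t : ℝ, 0 ≤ t → c + t • d ∈ A := by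
  have hfar : ∀ k : ℕ, ∃ x ∈ A, (k : ℝ) < ‖x - c‖ := by
    intro k
    by_contra! hk
    exact hnb ((Metric.isBounded_iff_subset_closedBall c).2
      ⟨k, fun x hx => by simpa [dist_eq_norm] using hk x hx⟩)
  choose x hxA hxk using hfar
  have hpos : ∀ k, 0 < ‖x k - c‖ := fun k => (Nat.cast_nonneg k).trans_lt (hxk k)
  set dir : ℕ → E := fun k => ‖x k - c‖⁻¹ • (x k - c)
  have hdir : ∀ k, dir k ∈ Metric.sphere (0 : E) 1 := fun k => by
    simp [dir, norm_smul, (hpos k).ne']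
  obtain ⟨d, hd, φ, hφ, hlim⟩ := (isCompact_sphere (0 : E) 1).tendsto_subseq hdir
  refine ⟨d, ne_zero_of_mem_unit_sphere ⟨d, hd⟩, fun t ht => ?_⟩
  refine hAc.mem_of_tendsto (tendsto_const_nhds.add (hlim.const_smul t)) ?_
  filter_upwards [eventually_ge_atTop ⌈t⌉₊] with k hk
  -- `c + t • dir k` lies on the segment from `c` to `x k` as soon as `t ≤ ‖x k - c‖`.
  have htk : t ≤ ‖x (φ k) - c‖ := calc
    t ≤ ⌈t⌉₊ := Nat.le_ceil t
    _ ≤ φ k := by exact_mod_cast hk.trans hφ.le_apply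
    _ ≤ ‖x (φ k) - c‖ := (hxk _).le
  have hseg := hA.add_smul_sub_mem hc (hxA (φ k))
    ⟨by positivity, div_le_one_of_le₀ htk (hpos _).le⟩
  simpa [dir, smul_smul, div_eq_mul_inv] using hseg

lemma LowerSemicontinuous.isClosed_setOf_le {X : Type*} [TopologicalSpace X] {F G : X → EReal}
    (hF : LowerSemicontinuous F) (hG : Continuous G) : IsClosed {x | F x ≤ G x} :=
  hF.isClosed_epigraph.preimage (continuous_id.prodMk hG)

lemma EReal.coe_inv_mul_sub_le_coe_iff {a : EReal} (ha : a ≠ ⊥) {c r μ : ℝ} (hr : 0 < r) :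
    ((r⁻¹ : ℝ) : EReal) * (a - c) ≤ μ ↔ a ≤ ↑(c + r * μ) := by
  induction a using EReal.rec with
  | bot => exact absurd rfl ha
  | top =>
    rw [EReal.top_sub_coe, EReal.coe_mul_top_of_pos (inv_pos.2 hr)]
    simp only [top_le_iff, EReal.coe_ne_top]
  | coe a =>
    norm_cast
    rw [inv_mul_le_iff₀ hr, sub_le_iff_le_add']

namespace PaperDP

section Recession

variable {E : Type*} [AddCommGroup E] [Module ℝ E]

/-- A convex function `E → ℝ ∪ {+∞}` with closed epigraph. -/
structure IsClosedConvexEFn [TopologicalSpace E] (g : E → EReal) : Prop where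
  lowerSemicontinuous : LowerSemicontinuous g
  convex : ConvexEFn g
  ne_bot : ∀ z, g z ≠ ⊥

lemma ConvexEFn.convex_epigraph {g : E → EReal} (hg : ConvexEFn g) :
    Convex ℝ {p : E × ℝ | g p.1 ≤ p.2} := by
  rintro ⟨x, α⟩ hx ⟨y, β⟩ hy a b ha hb hab
  calc g (a • x + b • y) ≤ a * g x + b * g y := hg x y a b ha hb hab
    _ ≤ a * α + b * β := add_le_add (mul_le_mul_of_nonneg_left hx (EReal.coe_nonneg.2 ha))
          (mul_le_mul_of_nonneg_left hy (EReal.coe_nonneg.2 hb))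
    _ = ↑(a * α + b * β) := by norm_cast

lemma ConvexEFn.convex_sublevel {g : E → EReal} (hg : ConvexEFn g) (α : ℝ) :
    Convex ℝ {x | g x ≤ α} := by
  intro x hx y hy a b ha hb hab
  simpa [← add_mul, hab] using hg.convex_epigraph (x := (x, α)) (y := (y, α)) hx hy ha hb hab

lemma IsClosedConvexEFn.isClosed_epigraph [TopologicalSpace E] {g : E → EReal}
    (hg : IsClosedConvexEFn g) : IsClosed {p : E × ℝ | g p.1 ≤ p.2} :=
  LowerSemicontinuous.isClosed_setOf_le (hg.lowerSemicontinuous.comp continuous_fst)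
    (continuous_coe_real_ereal.comp continuous_snd)

/-- `recessionFn g` is the infimum of `recessionFnAt g z` over the base points `z` with
`g z < ⊤`. -/
def recessionFnAt (g : E → EReal) (z y : E) : EReal :=
  ⨆ r : {r : ℝ // 0 < r}, ((r.1⁻¹ : ℝ) : EReal) * (g (z + r.1 • y) - g z)

lemma recessionFnAt_le_coe_iff {g : E → EReal} (hbot : ∀ w, g w ≠ ⊥) {z y : E} {c : ℝ}
    (hz : g z = c) {μ : ℝ} :
    recessionFnAt g z y ≤ μ ↔ ∀ r : ℝ, 0 < r → g (z + r • y) ≤ ↑(c + r * μ) := by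
  simp only [recessionFnAt, iSup_le_iff, Subtype.forall, hz]
  exact forall₂_congr fun r hr => EReal.coe_inv_mul_sub_le_coe_iff (hbot _) hr

variable [TopologicalSpace E] [IsTopologicalAddGroup E] [ContinuousSMul ℝ E]

-- A slope bound at `z'` is a ray in the epigraph from `(z', c')`; it moves to `(z, c)`.
lemma IsClosedConvexEFn.recessionFnAt_le {g : E → EReal} (hg : IsClosedConvexEFn g)
    {z z' : E} {c c' : ℝ} (hz : g z = c) (hz' : g z' = c') (y : E) :
    recessionFnAt g z y ≤ recessionFnAt g z' y := by
  refine EReal.le_of_forall_lt_iff_le.1 fun μ hμ => ?_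
  rw [recessionFnAt_le_coe_iff hg.ne_bot hz]
  have hray := (recessionFnAt_le_coe_iff hg.ne_bot hz').1 hμ.le
  intro r hr
  exact hg.convex.convex_epigraph.add_smul_mem_of_forall_add_smul_mem hg.isClosed_epigraph
    (c := (z', c')) (c' := (z, c)) (d := (y, μ)) hz.le hray hr

lemma IsClosedConvexEFn.recessionFn_eq_recessionFnAt {g : E → EReal}
    (hg : IsClosedConvexEFn g) {z : E} {c : ℝ} (hz : g z = c) (y : E) :
    recessionFn g y = recessionFnAt g z y := by
  refine le_antisymm (iInf_le_of_le ⟨z, hz ▸ EReal.coe_lt_top c⟩ le_rfl) (le_iInf ?_)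
  rintro ⟨w, hw⟩
  exact hg.recessionFnAt_le hz (EReal.coe_toReal hw.ne (hg.ne_bot w)).symm y

lemma IsClosedConvexEFn.recessionFn_le_coe_iff {g : E → EReal} (hg : IsClosedConvexEFn g)
    {z y : E} {c : ℝ} (hz : g z = c) {μ : ℝ} :
    recessionFn g y ≤ μ ↔ ∀ r : ℝ, 0 < r → g (z + r • y) ≤ ↑(c + r * μ) := by
  rw [hg.recessionFn_eq_recessionFnAt hz, recessionFnAt_le_coe_iff hg.ne_bot hz]

-- The ray `(z, α) + ℝ₊ (y, 0)` lies in the epigraph; transport it to `(z, g z)`.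
lemma IsClosedConvexEFn.recessionFn_nonpos_of_forall_le {g : E → EReal}
    (hg : IsClosedConvexEFn g) {z y : E} {c α : ℝ} (hz : g z = c)
    (h : ∀ r : ℝ, 0 < r → g (z + r • y) ≤ α) : recessionFn g y ≤ 0 := by
  rw [← EReal.coe_zero, hg.recessionFn_le_coe_iff hz]
  intro r hr
  have hray := hg.convex.convex_epigraph.add_smul_mem_of_forall_add_smul_mem hg.isClosed_epigraph
    (c := (z, α)) (c' := (z, c)) (d := (y, 0)) hz.le (fun t ht => by simpa using h t ht) hr
  simpa using hray

lemma IsClosedConvexEFn.apply_add_le_of_recessionFn_nonpos {g : E → EReal}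
    (hg : IsClosedConvexEFn g) {y : E} (hy : recessionFn g y ≤ 0) (z : E) :
    g (z + y) ≤ g z := by
  by_cases hz : g z = ⊤
  · simp [hz]
  have hz' := (EReal.coe_toReal hz (hg.ne_bot z)).symm
  have h := (hg.recessionFn_le_coe_iff hz' (μ := 0)).1 (by simpa using hy) 1 one_pos
  simpa [← hz'] using h

lemma IsClosedConvexEFn.apply_add_eq {g : E → EReal} (hg : IsClosedConvexEFn g) {y : E}
    (hy : recessionFn g y ≤ 0) (hy' : recessionFn g (-y) ≤ 0) (z : E) : g (z + y) = g z :=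
  le_antisymm (hg.apply_add_le_of_recessionFn_nonpos hy z)
    (by simpa using hg.apply_add_le_of_recessionFn_nonpos hy' (z + y))

end Recession

section InfProjection

variable {E F : Type*} [NormedAddCommGroup E] [InnerProductSpace ℝ E]
  [NormedAddCommGroup F] [NormedSpace ℝ F] {f : E × F → EReal} {S : Submodule ℝ E}

lemma apply_add_inl_eq (hf : IsClosedConvexEFn f)
    (hS : {x : E | recessionFn f (x, 0) ≤ 0} = S) {y : E} (hy : y ∈ S) (w : E × F) :
    f (w + (y, 0)) = f w := by
  have hrec : ∀ v ∈ S, recessionFn f (v, 0) ≤ 0 := fun v hv => by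
    rwa [← SetLike.mem_coe, ← hS] at hv
  exact hf.apply_add_eq (hrec y hy) (by simpa using hrec (-y) (S.neg_mem hy)) w

lemma exists_mem_orthogonal_apply_eq [FiniteDimensional ℝ E] (hf : IsClosedConvexEFn f)
    (hS : {x : E | recessionFn f (x, 0) ≤ 0} = S) (x : E) (v : F) :
    ∃ x' ∈ Sᗮ, f (x', v) = f (x, v) := by
  obtain ⟨s, hs, x', hx', rfl⟩ := S.exists_add_mem_mem_orthogonal x
  refine ⟨x', hx', ?_⟩
  simpa [add_comm] using (apply_add_inl_eq hf hS hs (x', v)).symm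

lemma eq_zero_of_forall_apply_add_smul_le (hf : IsClosedConvexEFn f)
    (hS : {x : E | recessionFn f (x, 0) ≤ 0} = S) {d : E} (hd : d ∈ Sᗮ) {w : E × F} {c α : ℝ}
    (hw : f w = c) (h : ∀ t : ℝ, 0 < t → f (w + t • (d, 0)) ≤ α) : d = 0 := by
  have hdS : d ∈ S := by
    rw [← SetLike.mem_coe, ← hS]
    exact hf.recessionFn_nonpos_of_forall_le hw h
  exact Submodule.disjoint_def.1 S.orthogonal_disjoint d hdS hd

-- A ray in this set has no `F`-component since `B` is bounded, hence no `E`-component.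
lemma isCompact_orthogonal_prod_inter_sublevel [FiniteDimensional ℝ E] [ProperSpace F]
    (hf : IsClosedConvexEFn f) (hS : {x : E | recessionFn f (x, 0) ≤ 0} = S) {B : Set F}
    (hBc : IsClosed B) (hBconv : Convex ℝ B) (hBb : IsBounded B) (α : ℝ) :
    IsCompact ((Sᗮ : Set E) ×ˢ B ∩ {w | f w ≤ α}) := by
  set K := (Sᗮ : Set E) ×ˢ B ∩ {w | f w ≤ α}
  have hKc : IsClosed K := ((Submodule.closed_of_finiteDimensional Sᗮ).prod hBc).inter
    (hf.lowerSemicontinuous.isClosed_preimage α)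
  have hKconv : Convex ℝ K := (Sᗮ.convex.prod hBconv).inter (hf.convex.convex_sublevel α)
  rcases K.eq_empty_or_nonempty with hK | ⟨w, hw⟩
  · simp [hK]
  refine Metric.isCompact_of_isClosed_isBounded hKc (by_contra fun hnb => ?_)
  obtain ⟨d, hd0, hd⟩ := hKconv.exists_forall_add_smul_mem_of_not_isBounded hKc hnb hw
  have hd2 : d.2 = 0 := hBb.eq_zero_of_forall_add_smul_mem fun t ht => (hd t ht).1.2
  have hdS : d.1 ∈ Sᗮ := by simpa using Sᗮ.sub_mem (hd 1 zero_le_one).1.1 hw.1.1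
  have hwc : f w = (f w).toReal :=
    (EReal.coe_toReal (ne_top_of_le_ne_top (EReal.coe_ne_top α) hw.2) (hf.ne_bot w)).symm
  have hd1 : d.1 = 0 := eq_zero_of_forall_apply_add_smul_le hf hS hdS hwc fun t ht => by
    simpa [← hd2] using (hd t ht.le).2
  exact hd0 (Prod.ext hd1 hd2)

variable [FiniteDimensional ℝ E] [ProperSpace F]

lemma exists_mem_orthogonal_forall_le (hf : IsClosedConvexEFn f)
    (hS : {x : E | recessionFn f (x, 0) ≤ 0} = S) (u : F) :
    ∃ x ∈ Sᗮ, ∀ x', f (x, u) ≤ f (x', u) := by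
  by_cases hfin : ∃ x₀, f (x₀, u) ≠ ⊤
  swap
  · push Not at hfin
    exact ⟨0, Sᗮ.zero_mem, fun x' => by simp [hfin]⟩
  obtain ⟨x₀, hx₀⟩ := hfin
  obtain ⟨x₁, hx₁, hx₁eq⟩ := exists_mem_orthogonal_apply_eq hf hS x₀ u
  set c := (f (x₀, u)).toReal
  have hK := isCompact_orthogonal_prod_inter_sublevel hf hS isClosed_singleton
    (convex_singleton u) isBounded_singleton c
  have hne : ((Sᗮ : Set E) ×ˢ {u} ∩ {w | f w ≤ c}).Nonempty :=
    ⟨(x₁, u), ⟨hx₁, rfl⟩, hx₁eq.trans_le (EReal.le_coe_toReal hx₀)⟩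
  obtain ⟨⟨x, v⟩, ⟨⟨hx, hv⟩, hxc⟩, hmin⟩ :=
    LowerSemicontinuousOn.exists_isMinOn hne hK (hf.lowerSemicontinuous.lowerSemicontinuousOn _)
  obtain rfl : u = v := (Set.mem_singleton_iff.1 hv).symm
  refine ⟨x, hx, fun x' => ?_⟩
  obtain ⟨x'', hx'', hx''eq⟩ := exists_mem_orthogonal_apply_eq hf hS x' u
  rw [← hx''eq]
  rcases le_total (f (x'', u)) c with h | h
  · exact hmin ⟨⟨hx'', rfl⟩, h⟩
  · exact hxc.trans h

lemma exists_mem_orthogonal_iInf_eq (hf : IsClosedConvexEFn f)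
    (hS : {x : E | recessionFn f (x, 0) ≤ 0} = S) (u : F) :
    ∃ x ∈ Sᗮ, ⨅ x', f (x', u) = f (x, u) := by
  obtain ⟨x, hx, hmin⟩ := exists_mem_orthogonal_forall_le hf hS u
  exact ⟨x, hx, le_antisymm (iInf_le _ x) (le_iInf hmin)⟩

lemma convexEFn_iInf (hf : IsClosedConvexEFn f)
    (hS : {x : E | recessionFn f (x, 0) ≤ 0} = S) :
    ConvexEFn fun u => ⨅ x, f (x, u) := by
  intro u v a b ha hb hab
  obtain ⟨xu, -, hu⟩ := exists_mem_orthogonal_iInf_eq hf hS u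
  obtain ⟨xv, -, hv⟩ := exists_mem_orthogonal_iInf_eq hf hS v
  dsimp only
  rw [hu, hv]
  exact (iInf_le _ (a • xu + b • xv)).trans (hf.convex (xu, u) (xv, v) a b ha hb hab)

-- Near `u`, the sublevel set `{p ≤ α}` is the projection of a compact set.
lemma lowerSemicontinuous_iInf (hf : IsClosedConvexEFn f)
    (hS : {x : E | recessionFn f (x, 0) ≤ 0} = S) :
    LowerSemicontinuous fun u => ⨅ x, f (x, u) := by
  rw [lowerSemicontinuous_iff_isClosed_preimage]
  intro α
  induction α using EReal.rec with
  | bot =>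
    convert isClosed_empty
    refine Set.eq_empty_of_forall_notMem fun u hu => ?_
    obtain ⟨x, -, hx⟩ := exists_mem_orthogonal_iInf_eq hf hS u
    exact hf.ne_bot (x, u) (le_bot_iff.1 (hx ▸ hu))
  | top => simp
  | coe α =>
    refine isClosed_of_closure_subset fun u hu => ?_
    set T := (fun u => ⨅ x, f (x, u)) ⁻¹' Set.Iic (α : EReal)
    have hK := isCompact_orthogonal_prod_inter_sublevel hf hS Metric.isClosed_closedBall
      (convex_closedBall u 1) Metric.isBounded_closedBall α
    have hKT : Prod.snd '' ((Sᗮ : Set E) ×ˢ Metric.closedBall u 1 ∩ {w | f w ≤ α}) ⊆ T := by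
      rintro _ ⟨w, ⟨-, hw⟩, rfl⟩
      exact (iInf_le (fun x => f (x, w.2)) w.1).trans hw
    have hTK : Metric.ball u 1 ∩ T ⊆
        Prod.snd '' ((Sᗮ : Set E) ×ˢ Metric.closedBall u 1 ∩ {w | f w ≤ α}) := by
      rintro v ⟨hv, hvT⟩
      obtain ⟨x, hx, hxv⟩ := exists_mem_orthogonal_iInf_eq hf hS v
      refine ⟨(x, v), ⟨⟨hx, Metric.ball_subset_closedBall hv⟩, ?_⟩, rfl⟩
      show f (x, v) ≤ α
      rw [← hxv]
      exact hvT
    have hu' : u ∈ closure (Metric.ball u 1 ∩ T) :=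
      Metric.isOpen_ball.inter_closure ⟨Metric.mem_ball_self one_pos, hu⟩
    exact hKT (closure_minimal hTK (hK.image continuous_snd).isClosed hu')

lemma isClosedConvexEFn_iInf (hf : IsClosedConvexEFn f)
    (hS : {x : E | recessionFn f (x, 0) ≤ 0} = S) :
    IsClosedConvexEFn fun u => ⨅ x, f (x, u) where
  lowerSemicontinuous := lowerSemicontinuous_iInf hf hS
  convex := convexEFn_iInf hf hS
  ne_bot u := by
    obtain ⟨x, -, hx⟩ := exists_mem_orthogonal_iInf_eq hf hS u
    exact hx ▸ hf.ne_bot (x, u)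

lemma recessionFn_iInf_le (hf : IsClosedConvexEFn f)
    (hS : {x : E | recessionFn f (x, 0) ≤ 0} = S) {x₀ : E} {u₀ : F} {c₀ : ℝ}
    (hp : ⨅ x, f (x, u₀) = c₀) (hx₀ : f (x₀, u₀) = c₀) (u : F) :
    recessionFn (fun u' => ⨅ x, f (x, u')) u ≤ ⨅ x, recessionFn f (x, u) := by
  refine le_iInf fun x => EReal.le_of_forall_lt_iff_le.1 fun ν hν => ?_
  rw [(isClosedConvexEFn_iInf hf hS).recessionFn_le_coe_iff hp]
  intro r hr
  exact (iInf_le _ (x₀ + r • x)).trans ((hf.recessionFn_le_coe_iff hx₀).1 hν.le r hr)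

-- `C` is unbounded: it contains `(x, t)` for a minimizer `x` at `u₀ + t u`, for every `t > 0`.
lemma exists_recessionFn_le (hf : IsClosedConvexEFn f)
    (hS : {x : E | recessionFn f (x, 0) ≤ 0} = S) {x₀ : E} {u₀ : F} {c₀ : ℝ} (hx₀S : x₀ ∈ Sᗮ)
    (hx₀ : f (x₀, u₀) = c₀) {u : F} {μ : ℝ}
    (h : ∀ r : ℝ, 0 < r → ⨅ x, f (x, u₀ + r • u) ≤ ↑(c₀ + r * μ)) :
    ∃ x, recessionFn f (x, u) ≤ μ := by
  set C : Set (E × ℝ) := {q | q.1 ∈ Sᗮ ∧ 0 ≤ q.2 ∧ f (q.1, u₀ + q.2 • u) ≤ ↑(c₀ + q.2 * μ)}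
  have hC₀ : (x₀, 0) ∈ C := ⟨hx₀S, le_rfl, by simp [hx₀]⟩
  have hCc : IsClosed C :=
    ((Submodule.closed_of_finiteDimensional Sᗮ).preimage continuous_fst).inter
      ((isClosed_le continuous_const continuous_snd).inter
        (LowerSemicontinuous.isClosed_setOf_le (hf.lowerSemicontinuous.comp (by fun_prop))
          (continuous_coe_real_ereal.comp (by fun_prop))))
  have hCconv : Convex ℝ C := by
    rintro ⟨x₁, t₁⟩ ⟨h₁S, h₁t, h₁⟩ ⟨x₂, t₂⟩ ⟨h₂S, h₂t, h₂⟩ a b ha hb hab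
    refine ⟨Sᗮ.convex h₁S h₂S ha hb hab, by simp only [Prod.snd_add, Prod.smul_snd]; positivity,
      ?_⟩
    have hcomb : f (a • (x₁, u₀ + t₁ • u) + b • (x₂, u₀ + t₂ • u)) ≤
        ↑(a * (c₀ + t₁ * μ) + b * (c₀ + t₂ * μ)) :=
      hf.convex.convex_epigraph (x := ((x₁, u₀ + t₁ • u), c₀ + t₁ * μ))
        (y := ((x₂, u₀ + t₂ • u), c₀ + t₂ * μ)) h₁ h₂ ha hb hab
    obtain rfl : b = 1 - a := by linarith
    convert hcomb using 2
    · ext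
      · simp
      · simp only [Prod.smul_mk, smul_eq_mul, Prod.mk_add_mk, smul_add]
        module
    · simp only [Prod.smul_mk, smul_eq_mul, Prod.mk_add_mk]
      ring
  have hCnb : ¬ IsBounded C := by
    intro hCb
    obtain ⟨R, hR⟩ := isBounded_iff_forall_norm_le.1 hCb
    obtain ⟨x, hxS, hx⟩ := exists_mem_orthogonal_iInf_eq hf hS (u₀ + (|R| + 1) • u)
    have hmem : (x, |R| + 1) ∈ C := ⟨hxS, by positivity, hx ▸ h _ (by positivity)⟩
    have hnorm := (norm_snd_le (x, |R| + 1)).trans (hR _ hmem)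
    rw [Real.norm_of_nonneg (by positivity)] at hnorm
    linarith [le_abs_self R]
  obtain ⟨d, hd0, hd⟩ := hCconv.exists_forall_add_smul_mem_of_not_isBounded hCc hCnb hC₀
  have hdS : d.1 ∈ Sᗮ := by simpa using Sᗮ.sub_mem (hd 1 zero_le_one).1 hx₀S
  rcases (show 0 ≤ d.2 by simpa using (hd 1 zero_le_one).2.1).eq_or_lt with hd2 | hd2
  · refine absurd (Prod.ext ?_ hd2.symm) hd0
    refine eq_zero_of_forall_apply_add_smul_le hf hS hdS hx₀ (α := c₀) fun t ht => ?_
    simpa [← hd2] using (hd t ht.le).2.2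
  · refine ⟨d.2⁻¹ • d.1, (hf.recessionFn_le_coe_iff hx₀).2 fun r hr => ?_⟩
    have hray := (hd (r / d.2) (by positivity)).2.2
    have hr' : r / d.2 * d.2 = r := div_mul_cancel₀ r hd2.ne'
    simp only [Prod.fst_add, Prod.snd_add, Prod.smul_fst, Prod.smul_snd, smul_eq_mul, zero_add,
      hr'] at hray
    simpa [smul_smul, div_eq_mul_inv] using hray

lemma le_recessionFn_iInf (hf : IsClosedConvexEFn f)
    (hS : {x : E | recessionFn f (x, 0) ≤ 0} = S) {x₀ : E} {u₀ : F} {c₀ : ℝ} (hx₀S : x₀ ∈ Sᗮ)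
    (hp : ⨅ x, f (x, u₀) = c₀) (hx₀ : f (x₀, u₀) = c₀) (u : F) :
    ⨅ x, recessionFn f (x, u) ≤ recessionFn (fun u' => ⨅ x, f (x, u')) u := by
  refine EReal.le_of_forall_lt_iff_le.1 fun μ hμ => ?_
  obtain ⟨x, hx⟩ := exists_recessionFn_le hf hS hx₀S hx₀
    (((isClosedConvexEFn_iInf hf hS).recessionFn_le_coe_iff hp).1 hμ.le)
  exact iInf_le_of_le x hx

lemma recessionFn_iInf (hf : IsClosedConvexEFn f)
    (hS : {x : E | recessionFn f (x, 0) ≤ 0} = S) (hp : ∃ u₀, ⨅ x, f (x, u₀) < ⊤) (u : F) :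
    recessionFn (fun u' => ⨅ x, f (x, u')) u = ⨅ x, recessionFn f (x, u) := by
  obtain ⟨u₀, hu₀⟩ := hp
  obtain ⟨x₀, hx₀S, hx₀⟩ := exists_mem_orthogonal_iInf_eq hf hS u₀
  have hc₀ := (EReal.coe_toReal hu₀.ne ((isClosedConvexEFn_iInf hf hS).ne_bot u₀)).symm
  exact le_antisymm (recessionFn_iInf_le hf hS hc₀ (hx₀.symm.trans hc₀) u)
    (le_recessionFn_iInf hf hS hx₀S hc₀ (hx₀.symm.trans hc₀) u)

end InfProjection

theorem statement19_general (n m : ℕ)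
    (f : EuclideanSpace ℝ (Fin n) × EuclideanSpace ℝ (Fin m) → EReal)
    (hlsc : LowerSemicontinuous f) (hconv : ConvexEFn f)
    (hproper₂ : ∀ z, f z ≠ ⊥)
    (hN : ∃ S : Submodule ℝ (EuclideanSpace ℝ (Fin n)),
      {x : EuclideanSpace ℝ (Fin n) | recessionFn f (x, 0) ≤ 0} = ↑S) :
    LowerSemicontinuous (fun u : EuclideanSpace ℝ (Fin m) => ⨅ x, f (x, u)) ∧
    Convex ℝ {q : EuclideanSpace ℝ (Fin m) × ℝ |
      (⨅ x, f (x, q.1)) ≤ (q.2 : EReal)} ∧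
    (∀ u : EuclideanSpace ℝ (Fin m), ∃ x : EuclideanSpace ℝ (Fin n),
      (∀ x', f (x, u) ≤ f (x', u)) ∧
      ∀ y : EuclideanSpace ℝ (Fin n), recessionFn f (y, 0) ≤ 0 → ⟪x, y⟫ = 0) ∧
    ((∃ u : EuclideanSpace ℝ (Fin m), (⨅ x, f (x, u)) < ⊤) →
      (∀ u : EuclideanSpace ℝ (Fin m), (⨅ x, f (x, u)) ≠ ⊥) →
      ∀ u : EuclideanSpace ℝ (Fin m),
        recessionFn (fun u' => ⨅ x, f (x, u')) u = ⨅ x, recessionFn f (x, u)) := by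
  obtain ⟨S, hS⟩ := hN
  have hf : IsClosedConvexEFn f := ⟨hlsc, hconv, hproper₂⟩
  have hp := isClosedConvexEFn_iInf hf hS
  refine ⟨hp.lowerSemicontinuous, hp.convex.convex_epigraph, fun u => ?_,
    fun hp₁ _ => recessionFn_iInf hf hS hp₁⟩
  obtain ⟨x, hxS, hmin⟩ := exists_mem_orthogonal_forall_le hf hS u
  refine ⟨x, hmin, fun y hy => ?_⟩
  have hyS : y ∈ S := by
    rw [← SetLike.mem_coe, ← hS]
    exact hy
  exact S.inner_left_of_mem_orthogonal hyS hxS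

/-- Lemma 6.1: if `f` is a proper lsc convex function on `ℝⁿ × ℝᵐ`
and `N = {x : f^∞(x,0) ≤ 0}` is a linear subspace, then the inf-projection
`p(u) = inf_x f(x,u)` is convex and lower semicontinuous, the infimum is attained at a
point of `N^⊥`, and if `p` is proper then `p^∞(u) = inf_x f^∞(x,u)`. -/
theorem statement19 (n m : ℕ)
    (f : EuclideanSpace ℝ (Fin n) × EuclideanSpace ℝ (Fin m) → EReal)
    (hlsc : LowerSemicontinuous f) (hconv : ConvexEFn f)
    (hproper₁ : ∃ z, f z < ⊤) (hproper₂ : ∀ z, f z ≠ ⊥)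
    (hN : ∃ S : Submodule ℝ (EuclideanSpace ℝ (Fin n)),
      {x : EuclideanSpace ℝ (Fin n) | recessionFn f (x, 0) ≤ 0} = ↑S) :
    LowerSemicontinuous (fun u : EuclideanSpace ℝ (Fin m) => ⨅ x, f (x, u)) ∧
    Convex ℝ {q : EuclideanSpace ℝ (Fin m) × ℝ |
      (⨅ x, f (x, q.1)) ≤ (q.2 : EReal)} ∧
    (∀ u : EuclideanSpace ℝ (Fin m), ∃ x : EuclideanSpace ℝ (Fin n),
      (∀ x', f (x, u) ≤ f (x', u)) ∧
      ∀ y : EuclideanSpace ℝ (Fin n), recessionFn f (y, 0) ≤ 0 → ⟪x, y⟫ = 0) ∧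
    ((∃ u : EuclideanSpace ℝ (Fin m), (⨅ x, f (x, u)) < ⊤) →
      (∀ u : EuclideanSpace ℝ (Fin m), (⨅ x, f (x, u)) ≠ ⊥) →
      ∀ u : EuclideanSpace ℝ (Fin m),
        recessionFn (fun u' => ⨅ x, f (x, u')) u = ⨅ x, recessionFn f (x, u)) :=
  statement19_general n m f hlsc hconv hproper₂ hN

end PaperDP
end
end
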